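/- arXiv:1501.01230 — 5 statements merged into one kernel-verified Lean document; each statement's English description precedes it below -/
import Mathlib

section
/- Let f be an increasing real-valued function on [a,b] and ε > 0. Then there exist finitely many points h₁ = a < h₂ < ⋯ < h_k = b such that f(h_{j+1}−) − f(h_j+) ≤ ε for every j = 1, …, k−1, where f(t−) and f(t+) denote the left and right limits of f at t. -/
open MeasureTheory Set Filter Topology Metric ENNReal

noncomputable section

/-- Euclidean space `ℝⁿ`. -/
abbrev EucSp (n : ℕ) := EuclideanSpace ℝ (Fin n)

/-- The open unit cube `𝔾ⁿ = (0,1)ⁿ`. -/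
def Gcube (n : ℕ) : Set (EucSp n) := {x | ∀ j, x j ∈ Set.Ioo (0:ℝ) 1}

/-- A "basis mapping": to every point it assigns a family of sets. -/
abbrev BasisMap (n : ℕ) := EucSp n → Set (Set (EucSp n))

/-- `B` is a differentiation basis: every `R ∈ B(x)` is a bounded measurable set of positive
measure containing `x`, and `B(x)` contains sets of arbitrarily small diameter. -/
def IsDiffBasis {n : ℕ} (B : BasisMap n) : Prop :=
  ∀ x : EucSp n,
    (∀ R ∈ B x, x ∈ R ∧ Bornology.IsBounded R ∧ MeasurableSet R ∧ 0 < volume R) ∧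
    ∀ ε : ℝ, 0 < ε → ∃ R ∈ B x, Metric.diam R < ε

/-- Translation invariance: `B(x) = {x + I : I ∈ B(0)}`. -/
def IsTIBasis {n : ℕ} (B : BasisMap n) : Prop :=
  ∀ x : EucSp n, B x = (fun I => (fun y => x + y) '' I) '' B 0

/-- The truncated maximal operator `M_B^{(r)} f (x)`. -/
def maxTrunc {n : ℕ} (B : BasisMap n) (r : ℝ) (f : EucSp n → ℝ) (x : EucSp n) : ℝ≥0∞ :=
  ⨆ (R : Set (EucSp n)) (_ : R ∈ B x ∧ Metric.diam R < r),
    (∫⁻ y in R, ENNReal.ofReal |f y|) / volume R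

/-- The (untruncated) maximal operator `M_B f (x)`. -/
def maxOp {n : ℕ} (B : BasisMap n) (f : EucSp n → ℝ) (x : EucSp n) : ℝ≥0∞ :=
  ⨆ (R : Set (EucSp n)) (_ : R ∈ B x), (∫⁻ y in R, ENNReal.ofReal |f y|) / volume R

/-- The upper derivative `D̄_B(∫f, x)` equals `+∞`. -/
def upperDerivInfinite {n : ℕ} (B : BasisMap n) (f : EucSp n → ℝ) (x : EucSp n) : Prop :=
  ∀ M : ℝ, ∀ δ : ℝ, 0 < δ →
    ∃ R ∈ B x, Metric.diam R < δ ∧ M * (volume R).toReal < ∫ y in R, f y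

/-- The family `W_m` of dyadic intervals of order `m`. -/
def dyadicW {n : ℕ} (m : Fin n → ℕ) : Set (Set (EucSp n)) :=
  {S | ∃ k : Fin n → ℤ, S =
    {x : EucSp n | ∀ j, (k j : ℝ) / 2 ^ (m j) < x j ∧ x j < ((k j : ℝ) + 1) / 2 ^ (m j)}}

/-- The family `H_m` of all unions of dyadic intervals of order `m`. -/
def dyadicH {n : ℕ} (m : Fin n → ℕ) : Set (Set (EucSp n)) :=
  {S | ∃ T ⊆ dyadicW m, S = ⋃₀ T}

/-- `W_m* = {Q ∈ W_m : Q ⊆ 𝔾ⁿ}`. -/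
def dyadicWStar {n : ℕ} (m : Fin n → ℕ) : Set (Set (EucSp n)) :=
  {S | S ∈ dyadicW m ∧ S ⊆ Gcube n}

/-- `H_m* = {E ∈ H_m : E ⊆ 𝔾ⁿ}`. -/
def dyadicHStar {n : ℕ} (m : Fin n → ℕ) : Set (Set (EucSp n)) :=
  {S | S ∈ dyadicH m ∧ S ⊆ Gcube n}

/-- An (open) `n`-dimensional interval. -/
def IsOpenInterval {n : ℕ} (Q : Set (EucSp n)) : Prop :=
  ∃ a b : Fin n → ℝ, Q = {x : EucSp n | ∀ j, a j < x j ∧ x j < b j}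

/-- The function `h·χ_E`. -/
def indFun {n : ℕ} (E : Set (EucSp n)) (h : ℝ) : EucSp n → ℝ :=
  E.indicator fun _ => h

/-- The `M_Φ`-property with the given constants `c` and `c(·)`. -/
def MPhiPropertyWith {n : ℕ} (Λ : Set (BasisMap n)) (Φ : ℝ → ℝ) (c : ℝ) (ch : ℝ → ℝ) : Prop :=
  ∀ h : ℝ, 1 < h → ∀ ε : ℝ, 0 < ε →
    ∃ (E : Set (EucSp n)) (P : BasisMap n → Set (EucSp n)) (Q : Set (EucSp n)),
      MeasurableSet E ∧ 0 < volume E ∧ IsOpenInterval Q ∧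
      (∀ B ∈ Λ, P B ⊆ {x | 1 < maxTrunc B ε (indFun E h) x}) ∧
      (∃ m : Fin n → ℕ, ∀ B ∈ Λ, P B ∈ dyadicH m) ∧
      (∀ B ∈ Λ, ENNReal.ofReal (c * Φ h) * volume E ≤ volume (P B)) ∧
      E ⊆ Q ∧ (∀ B ∈ Λ, P B ⊆ Q) ∧ Metric.diam Q < ε ∧
      ENNReal.ofReal (ch h) * volume Q ≤ volume E

/-- The `M_Φ`-property. -/
def MPhiProperty {n : ℕ} (Λ : Set (BasisMap n)) (Φ : ℝ → ℝ) : Prop :=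
  ∃ c : ℝ, 0 < c ∧ ∃ ch : ℝ → ℝ, (∀ h : ℝ, 1 < h → ch h ∈ Set.Ioo (0:ℝ) 1) ∧
    MPhiPropertyWith Λ Φ c ch

/-- `f ∈ L(𝔾ⁿ)`: integrable and supported in the unit cube. -/
def MemL {n : ℕ} (f : EucSp n → ℝ) : Prop :=
  Integrable f ∧ {x | f x ≠ 0} ⊆ Gcube n

/-- `Φ` is non-regular: `limsup_{t→∞} Φ(t)/t = ∞`. -/
def NonRegular (Φ : ℝ → ℝ) : Prop :=
  ∀ M T : ℝ, ∃ t : ℝ, T < t ∧ 0 < t ∧ M * t < Φ t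

/-- `Φ` satisfies the `Δ₂`-condition at infinity. -/
def Delta2 (Φ : ℝ → ℝ) : Prop :=
  ∃ c τ : ℝ, 0 < c ∧ 0 < τ ∧ ∀ t : ℝ, τ < t → Φ (2 * t) ≤ c * Φ t

/-- The `γ`-rotated basis `B(γ)`. -/
def rotateBasis {n : ℕ} (B : BasisMap n) (γ : EucSp n ≃ₗᵢ[ℝ] EucSp n) : BasisMap n :=
  fun x => (fun R => (fun y => x + γ (y - x)) '' R) '' B x

/-- `γ` is a rotation (orientation-preserving linear isometry). -/
def IsRotation {n : ℕ} (γ : EucSp n ≃ₗᵢ[ℝ] EucSp n) : Prop :=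
  LinearMap.det (γ.toLinearEquiv : EucSp n →ₗ[ℝ] EucSp n) = 1

/-- The function `Φ_B(h) = lim_{t→∞} limsup_{r→0} |{M_B^{(tr)}(hχ_{V_r}) > 1}| / |V_r|`. -/
def PhiB {n : ℕ} (B : BasisMap n) (h : ℝ) : ℝ≥0∞ :=
  Filter.limsup (fun t : ℝ =>
    Filter.limsup (fun r : ℝ =>
      volume {x : EucSp n | 1 < maxTrunc B (t * r) (indFun (Metric.ball (0 : EucSp n) r) h) x}
        / volume (Metric.ball (0 : EucSp n) r)) (𝓝[>] (0:ℝ))) Filter.atTop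

/-- The basis `𝐈ₙᵏ` of intervals with at most `k` distinct edge lengths. -/
def baseInk (n k : ℕ) : BasisMap n := fun x =>
  {R | ∃ a b : Fin n → ℝ,
    R = {y : EucSp n | ∀ j, a j < y j ∧ y j < b j} ∧ (∀ j, a j < x j ∧ x j < b j) ∧
    (Finset.image (fun j => b j - a j) Finset.univ).card ≤ k}

/-- `f` belongs to the Orlicz class `ψ(L)(𝔾ⁿ)`. -/
def MemPsiL {n : ℕ} (ψ : ℝ → ℝ) (f : EucSp n → ℝ) : Prop :=
  Measurable f ∧ {x | f x ≠ 0} ⊆ Gcube n ∧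
    ∫⁻ x in {x | f x ≠ 0}, ENNReal.ofReal (ψ |f x|) < ⊤

/-- The Luxemburg distance on `ψ(L)(𝔾ⁿ)`. -/
def luxDist {n : ℕ} (ψ : ℝ → ℝ) (f g : EucSp n → ℝ) : ℝ :=
  sInf {lam : ℝ | 0 < lam ∧
    ∫⁻ x in {x | f x ≠ g x}, ENNReal.ofReal (ψ (|f x - g x| / lam)) ≤ 1}

/-- `f ∈ S_{Δ(B)}`: an integrable function supported in `𝔾ⁿ` whose integral has upper
derivative `+∞` a.e. on `𝔾ⁿ` with respect to every rotation of `B`. -/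
def MemSDeltaB {n : ℕ} (B : BasisMap n) (f : EucSp n → ℝ) : Prop :=
  Integrable f ∧ {x | f x ≠ 0} ⊆ Gcube n ∧
    ∀ γ : EucSp n ≃ₗᵢ[ℝ] EucSp n, IsRotation γ →
      ∀ᵐ x ∂(volume : Measure (EucSp n)), x ∈ Gcube n →
        upperDerivInfinite (rotateBasis B γ) f x

/-- `T` is of the first Baire category in the space `ψ(L)(𝔾ⁿ)` with the Luxemburg metric:
`T` is a countable union of sets `F k`, each of which is nowhere dense (every ball of the
space contains a ball disjoint from `F k`). -/
def FirstCategoryInPsiL {n : ℕ} (ψ : ℝ → ℝ) (T : Set (EucSp n → ℝ)) : Prop :=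
  ∃ F : ℕ → Set (EucSp n → ℝ), T ⊆ (⋃ k, F k) ∧
    ∀ k : ℕ, ∀ f : EucSp n → ℝ, MemPsiL ψ f → ∀ ε : ℝ, 0 < ε →
      ∃ g : EucSp n → ℝ, MemPsiL ψ g ∧ luxDist ψ f g < ε ∧
        ∃ δ : ℝ, 0 < δ ∧ ∀ u : EucSp n → ℝ, MemPsiL ψ u → luxDist ψ g u < δ → u ∉ F k


/-!
Real induction on the set of `t ∈ [a, b]` for which `[a, t]` admits such a partition. Just to the
left of a point `t` the function is within `ε` of `f (t-)`, and just to its right within `ε` of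
`f (t+)`; so a partition ending slightly left of `t` extends to one ending at `t`, and a partition
ending at `t < b` extends slightly beyond `t`.
-/

open Function

section

variable {α β : Type*} [LinearOrder α] [TopologicalSpace α] [OrderTopology α] [DenselyOrdered α]
  [ConditionallyCompleteLinearOrder β] [TopologicalSpace β] [OrderTopology β]
  {f : α → β} {a b x : α}

theorem MonotoneOn.tendsto_leftLim_of_mem_Ioc (hf : MonotoneOn f (Icc a b)) (hx : x ∈ Ioc a b) :
    Tendsto f (𝓝[<] x) (𝓝 (leftLim f x)) := by
  have hsub : Ioo a x ⊆ Icc a b := fun u hu => ⟨hu.1.le, hu.2.le.trans hx.2⟩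
  have hbdd : BddAbove (f '' Ioo a x) := ⟨f x, by
    rintro _ ⟨u, hu, rfl⟩
    exact hf (hsub hu) ⟨hx.1.le, hx.2⟩ hu.2.le⟩
  have := nhdsLT_neBot_of_exists_lt ⟨a, hx.1⟩
  have h := (hf.mono hsub).tendsto_nhdsWithin_Ioo_left (nonempty_Ioo.2 hx.1) hbdd
  rwa [leftLim_eq_of_tendsto h]

theorem MonotoneOn.tendsto_rightLim_of_mem_Ico (hf : MonotoneOn f (Icc a b)) (hx : x ∈ Ico a b) :
    Tendsto f (𝓝[>] x) (𝓝 (rightLim f x)) := by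
  have hsub : Ioo x b ⊆ Icc a b := fun u hu => ⟨hx.1.trans hu.1.le, hu.2.le⟩
  have hbdd : BddBelow (f '' Ioo x b) := ⟨f x, by
    rintro _ ⟨u, hu, rfl⟩
    exact hf ⟨hx.1, hx.2.le⟩ (hsub hu) hu.1.le⟩
  have := nhdsGT_neBot_of_exists_gt ⟨b, hx.2⟩
  have h := (hf.mono hsub).tendsto_nhdsWithin_Ioo_right (nonempty_Ioo.2 hx.2) hbdd
  rwa [rightLim_eq_of_tendsto h]

theorem MonotoneOn.leftLim_le_of_mem_Ioc (hf : MonotoneOn f (Icc a b)) (hx : x ∈ Ioc a b) :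
    leftLim f x ≤ f x :=
  have := nhdsLT_neBot_of_exists_lt ⟨a, hx.1⟩
  le_of_tendsto (hf.tendsto_leftLim_of_mem_Ioc hx) <| by
    filter_upwards [Ioo_mem_nhdsLT hx.1] with u hu
    exact hf ⟨hu.1.le, hu.2.le.trans hx.2⟩ ⟨hx.1.le, hx.2⟩ hu.2.le

theorem MonotoneOn.le_rightLim_of_mem_Ico (hf : MonotoneOn f (Icc a b)) (hx : x ∈ Ico a b) :
    f x ≤ rightLim f x :=
  have := nhdsGT_neBot_of_exists_gt ⟨b, hx.2⟩
  ge_of_tendsto (hf.tendsto_rightLim_of_mem_Ico hx) <| by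
    filter_upwards [Ioo_mem_nhdsGT hx.2] with u hu
    exact hf ⟨hx.1, hx.2.le⟩ ⟨hx.1.trans hu.1.le, hu.2.le⟩ hu.1.le

end

theorem induction_Icc_of_nhdsLT {α : Type*} [ConditionallyCompleteLinearOrder α]
    [TopologicalSpace α] [OrderTopology α] {P : α → Prop} {a b : α} (hab : a ≤ b) (ha : P a)
    (hleft : ∀ c ∈ Ioc a b, ∀ᶠ t in 𝓝[<] c, P t → P c)
    (hright : ∀ c ∈ Ico a b, P c → ∃ s ∈ Ioc c b, P s) : P b := by
  set S := {t ∈ Icc a b | P t}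
  have haS : a ∈ S := ⟨⟨le_rfl, hab⟩, ha⟩
  have hbdd : BddAbove S := ⟨b, fun t ht => ht.1.2⟩
  have hac : a ≤ sSup S := le_csSup hbdd haS
  have hcb : sSup S ≤ b := csSup_le ⟨a, haS⟩ fun t ht => ht.1.2
  have hPc : P (sSup S) := by
    rcases hac.eq_or_lt with hac | hac
    · exact hac ▸ ha
    obtain ⟨l, hlc, hl⟩ := (mem_nhdsLT_iff_exists_Ioo_subset' hac).1 (hleft _ ⟨hac, hcb⟩)
    obtain ⟨t, htS, hlt⟩ := exists_lt_of_lt_csSup ⟨a, haS⟩ hlc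
    rcases (le_csSup hbdd htS).eq_or_lt with htc | htc
    · exact htc ▸ htS.2
    · exact hl ⟨hlt, htc⟩ htS.2
  rcases hcb.eq_or_lt with hcb | hcb
  · exact hcb ▸ hPc
  obtain ⟨s, hs, hPs⟩ := hright _ ⟨hac, hcb⟩ hPc
  exact absurd (le_csSup hbdd ⟨⟨hac.trans hs.1.le, hs.2⟩, hPs⟩) hs.1.not_ge

def FinePartition (f : ℝ → ℝ) (ε a t : ℝ) : Prop :=
  ∃ (k : ℕ) (h : Fin (k + 1) → ℝ), StrictMono h ∧ h 0 = a ∧ h (Fin.last k) = t ∧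
    ∀ j : Fin k, leftLim f (h j.succ) - rightLim f (h j.castSucc) ≤ ε

namespace FinePartition

variable {f : ℝ → ℝ} {ε a b t s : ℝ}

theorem refl (f : ℝ → ℝ) (ε a : ℝ) : FinePartition f ε a a :=
  ⟨0, fun _ => a, Subsingleton.strictMono (α := Fin 1) _, rfl, rfl, Fin.elim0⟩

theorem snoc (ht : FinePartition f ε a t) (hts : t < s)
    (hjump : leftLim f s - rightLim f t ≤ ε) : FinePartition f ε a s := by
  obtain ⟨k, h, hmono, h0, hlast, hgap⟩ := ht
  refine ⟨k + 1, Fin.snoc h s, ?_, by simpa using h0, Fin.snoc_last _ _, ?_⟩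
  · refine Fin.strictMono_iff_lt_succ.2 fun j => ?_
    induction j using Fin.lastCases with
    | last => simpa [hlast] using hts
    | cast i =>
      simpa only [Fin.succ_castSucc, Fin.snoc_castSucc] using hmono (Fin.castSucc_lt_succ (i := i))
  · intro j
    induction j using Fin.lastCases with
    | last => simpa [hlast] using hjump
    | cast i => simpa only [Fin.succ_castSucc, Fin.snoc_castSucc] using hgap i

theorem eventually_nhdsLT (hf : MonotoneOn f (Icc a b)) (hε : 0 < ε) (ht : t ∈ Ioc a b) :
    ∀ᶠ u in 𝓝[<] t, FinePartition f ε a u → FinePartition f ε a t := by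
  filter_upwards [(hf.tendsto_leftLim_of_mem_Ioc ht).eventually
    (eventually_gt_nhds (sub_lt_self _ hε)), Ioo_mem_nhdsLT ht.1] with u hfu hu hP
  have := hf.le_rightLim_of_mem_Ico ⟨hu.1.le, hu.2.trans_le ht.2⟩
  exact hP.snoc hu.2 (by linarith)

theorem exists_gt (hf : MonotoneOn f (Icc a b)) (hε : 0 < ε) (ht : t ∈ Ico a b)
    (hP : FinePartition f ε a t) : ∃ s ∈ Ioc t b, FinePartition f ε a s := by
  obtain ⟨s, hfs, hs⟩ := ((hf.tendsto_rightLim_of_mem_Ico ht).eventually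
    (eventually_lt_nhds (lt_add_of_pos_right _ hε))).and (Ioo_mem_nhdsGT ht.2) |>.exists
  have := hf.leftLim_le_of_mem_Ioc ⟨ht.1.trans_lt hs.1, hs.2.le⟩
  exact ⟨s, Ioo_subset_Ioc_self hs, hP.snoc hs.1 (by linarith)⟩

end FinePartition

theorem stmt3 (f : ℝ → ℝ) (a b : ℝ) (hab : a < b) (hf : MonotoneOn f (Set.Icc a b))
    (ε : ℝ) (hε : 0 < ε) :
    ∃ (k : ℕ) (h : Fin (k + 1) → ℝ), StrictMono h ∧ h 0 = a ∧ h (Fin.last k) = b ∧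
      ∀ j : Fin k, Function.leftLim f (h j.succ) - Function.rightLim f (h j.castSucc) ≤ ε :=
  induction_Icc_of_nhdsLT (P := FinePartition f ε a) hab.le (FinePartition.refl f ε a)
    (fun _ => FinePartition.eventually_nhdsLT hf hε)
    (fun _ => FinePartition.exists_gt hf hε)
end
end

section
/- Let n ≥ 2, let Φ : (0,∞) → (0,∞) be an increasing function, let f ∈ L(𝔾ⁿ), let k ∈ ℕ with f/k ∉ Φ(L)(𝔾ⁿ), and let α : (1,∞) → (0,∞). Then there exist measurable sets A₁, …, A_m ⊂ 𝔾ⁿ and numbers h₁, …, h_m such that: (1) A_j ∩ A_i = ∅ for i ≠ j; (2) k < h_j ≤ |f(x)| for every j and every x ∈ A_j; (3) 0 < |A_j| ≤ α(h_j/k) for every j; (4) Σ_{j=1}^m Φ(h_j/k)·|A_j| > k. -/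
/-! Let `F = |f|/k` for a measurable representative of `f`; on `{F > 1}` the integral of `Φ ∘ F`
is still infinite. A simple function `φ ≤ Φ ∘ F` with integral `> 2k` has finitely many level sets
`S_c`, and `Φ ∘ F ≥ c` on `S_c`. Since `{t > 1 : Φ t ≥ c}` is an upper set of `ℝ`, hence an
increasing countable union of rays `[t, ∞)`, continuity from below gives a height `h` with
`Φ h ≥ c` for which `S_c ∩ {F ≥ h}` keeps half the measure of `S_c`; these pieces give
`∑ Φ(h) |B| > k`. Cutting each piece by a fine grid of the cube makes the parts have measure at
most `α(h)` without changing the sum. -/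

open MeasureTheory Set Filter Topology Metric ENNReal

noncomputable section

open Function
open scoped NNReal

theorem IsUpperSet.exists_antitone_iUnion_Ici {T : Set ℝ} (hT : IsUpperSet T)
    (hne : T.Nonempty) (hbdd : BddBelow T) :
    ∃ u : ℕ → ℝ, Antitone u ∧ (∀ m, u m ∈ T) ∧ ⋃ m, Set.Ici (u m) = T := by
  by_cases hmin : sInf T ∈ T
  · refine ⟨fun _ => sInf T, antitone_const, fun _ => hmin, ?_⟩
    rw [Set.iUnion_const]
    exact subset_antisymm (fun t ht => hT ht hmin) fun t ht => csInf_le hbdd ht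
  · obtain ⟨u, hu, hlim, huT⟩ := exists_seq_tendsto_sInf hne hbdd
    refine ⟨u, hu, huT, subset_antisymm (Set.iUnion_subset fun m t ht => hT ht (huT m)) ?_⟩
    intro t ht
    have hlt : sInf T < t := (csInf_le hbdd ht).lt_of_ne fun h => hmin (h ▸ ht)
    obtain ⟨m, hm⟩ := (hlim.eventually (gt_mem_nhds hlt)).exists
    exact Set.mem_iUnion.2 ⟨m, hm.le⟩

theorem ENNReal.toReal_lt_sum_mul_toReal {ι : Type*} [Fintype ι] {a : ι → ℝ} {b : ι → ℝ≥0∞}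
    (ha : ∀ i, 0 ≤ a i) (hb : ∀ i, b i ≠ ∞) {M : ℝ≥0∞}
    (h : M < ∑ i, ENNReal.ofReal (a i) * b i) : M.toReal < ∑ i, a i * (b i).toReal := by
  have hfin : ∀ i ∈ Finset.univ, ENNReal.ofReal (a i) * b i ≠ ∞ := fun i _ =>
    ENNReal.mul_ne_top ENNReal.ofReal_ne_top (hb i)
  convert ENNReal.toReal_strict_mono (ENNReal.sum_ne_top.2 hfin) h using 1
  rw [ENNReal.toReal_sum hfin]
  exact Finset.sum_congr rfl fun i _ => by rw [ENNReal.toReal_mul, ENNReal.toReal_ofReal (ha i)]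

section Measure

variable {α : Type*} [MeasurableSpace α] {μ : Measure α}

theorem AEMeasurable.exists_measurable_setLIntegral_support_eq {f : α → ℝ}
    (hf : AEMeasurable f μ) (ψ : ℝ → ℝ≥0∞) :
    ∃ g : α → ℝ, Measurable g ∧ ∃ s : Set α, MeasurableSet s ∧ s ⊆ {x | f x ≠ 0} ∧
      (∀ x ∈ s, g x = f x) ∧ ∫⁻ x in s, ψ (g x) ∂μ = ∫⁻ x in {x | f x ≠ 0}, ψ (f x) ∂μ := by
  obtain ⟨N, hfgN, hN, hN0⟩ := exists_measurable_superset_of_null hf.ae_eq_mk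
  have hfg : ∀ x ∉ N, hf.mk f x = f x := fun x hx => (not_not.1 fun h => hx (hfgN h)).symm
  have hs : MeasurableSet ({x | hf.mk f x ≠ 0} \ N) :=
    (hf.measurable_mk (measurableSet_singleton 0)).compl.diff hN
  have hsf : {x | hf.mk f x ≠ 0} \ N = {x | f x ≠ 0} \ N := by
    ext x
    exact and_congr_left fun hx => show hf.mk f x ≠ 0 ↔ f x ≠ 0 by rw [hfg x hx]
  refine ⟨hf.mk f, hf.measurable_mk, _, hs, hsf ▸ Set.sdiff_subset, fun x hx => hfg x hx.2, ?_⟩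
  rw [setLIntegral_congr_fun hs fun x hx => by rw [hfg x hx.2], hsf,
    Measure.restrict_congr_set (sdiff_null_ae_eq_self hN0)]

theorem exists_mem_measure_le_two_mul_inter_Ici {T : Set ℝ} (hT : IsUpperSet T)
    (hbdd : BddBelow T) {F : α → ℝ} {S : Set α} (hST : S ⊆ F ⁻¹' T) (hS0 : μ S ≠ 0)
    (hS : μ S ≠ ∞) : ∃ t ∈ T, μ S ≤ 2 * μ (S ∩ F ⁻¹' Set.Ici t) := by
  obtain ⟨x, hx⟩ := nonempty_of_measure_ne_zero hS0
  obtain ⟨u, hu, huT, hU⟩ := hT.exists_antitone_iUnion_Ici ⟨F x, hST hx⟩ hbdd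
  have hmono : Monotone fun m => S ∩ F ⁻¹' Set.Ici (u m) := fun a b hab =>
    Set.inter_subset_inter_right _ (Set.preimage_mono (Set.Ici_subset_Ici.2 (hu hab)))
  have hsup : μ S = ⨆ m, μ (S ∩ F ⁻¹' Set.Ici (u m)) := by
    rw [← hmono.measure_iUnion, ← Set.inter_iUnion, ← Set.preimage_iUnion, hU,
      Set.inter_eq_left.2 hST]
  obtain ⟨m, hm⟩ := lt_iSup_iff.1 ((ENNReal.half_lt_self hS0 hS).trans_eq hsup)
  refine ⟨u m, huT m, ?_⟩
  rw [mul_comm, ← ENNReal.div_le_iff_le_mul (Or.inl two_ne_zero) (Or.inl ENNReal.ofNat_ne_top)]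
  exact hm.le

theorem setLIntegral_inter_lt_eq_top {Φ : ℝ → ℝ} (hΦ : MonotoneOn Φ (Set.Ioi 0)) {F : α → ℝ}
    (hF : Measurable F) {s : Set α} (hμs : μ s ≠ ∞) (hF0 : ∀ x ∈ s, 0 < F x)
    (hint : ∫⁻ x in s, ENNReal.ofReal (Φ (F x)) ∂μ = ∞) (a : ℝ) :
    ∫⁻ x in s ∩ {x | a < F x}, ENNReal.ofReal (Φ (F x)) ∂μ = ∞ := by
  have hlow : ∫⁻ x in s \ {x | a < F x}, ENNReal.ofReal (Φ (F x)) ∂μ ≠ ∞ := by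
    refine ne_top_of_le_ne_top (ENNReal.mul_ne_top ENNReal.ofReal_ne_top
      (measure_ne_top_of_subset Set.sdiff_subset hμs)) ((setLIntegral_mono measurable_const
        fun x hx => ?_).trans_eq (setLIntegral_const _ (ENNReal.ofReal (Φ a))))
    have hxa : F x ≤ a := not_lt.1 hx.2
    exact ENNReal.ofReal_le_ofReal (hΦ (hF0 x hx.1) ((hF0 x hx.1).trans_le hxa) hxa)
  have hsplit := lintegral_inter_add_sdiff (μ := μ) (fun x => ENNReal.ofReal (Φ (F x))) s
    (measurableSet_lt (measurable_const (a := a)) hF)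
  rw [hint] at hsplit
  by_contra h
  exact ENNReal.add_ne_top.2 ⟨h, hlow⟩ hsplit
theorem exists_simpleFunc_le_lt_sum_measure_inter {ψ : α → ℝ≥0∞} {s : Set α} {r : ℝ≥0∞}
    (h : r < ∫⁻ x in s, ψ x ∂μ) : ∃ φ : SimpleFunc α ℝ≥0, (∀ x, (φ x : ℝ≥0∞) ≤ ψ x) ∧
      r < ∑ c ∈ φ.range, c * μ (φ ⁻¹' {c} ∩ s) := by
  rw [lintegral_eq_nnreal] at h
  obtain ⟨φ, hφ⟩ := lt_iSup_iff.1 h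
  obtain ⟨hφψ, hr⟩ := lt_iSup_iff.1 hφ
  refine ⟨φ, hφψ, ?_⟩
  simpa only [SimpleFunc.map_lintegral,
    Measure.restrict_apply (φ.measurableSet_preimage _)] using hr

theorem exists_disjoint_lt_sum_of_setLIntegral_eq_top {Φ : ℝ → ℝ} {a : ℝ}
    (hΦ : MonotoneOn Φ (Set.Ioi a)) {F : α → ℝ} (hF : Measurable F) {s : Set α}
    (hs : MeasurableSet s) (hμs : μ s ≠ ∞) (hFs : ∀ x ∈ s, a < F x)
    (hint : ∫⁻ x in s, ENNReal.ofReal (Φ (F x)) ∂μ = ∞) {M : ℝ≥0∞} (hM : M ≠ ∞) :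
    ∃ (ι : Type) (_ : Fintype ι) (B : ι → Set α) (h : ι → ℝ),
      (∀ i, MeasurableSet (B i) ∧ B i ⊆ s ∧ a < h i ∧ ∀ x ∈ B i, h i ≤ F x) ∧
      Pairwise (Disjoint on B) ∧ M < ∑ i, ENNReal.ofReal (Φ (h i)) * μ (B i) := by
  classical
  obtain ⟨φ, hφ, hφM⟩ := exists_simpleFunc_le_lt_sum_measure_inter
    (hint ▸ ENNReal.mul_lt_top ENNReal.ofNat_lt_top hM.lt_top : 2 * M < _)
  set S : ℝ≥0 → Set α := fun c => φ ⁻¹' {c} ∩ s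
  set T : ℝ≥0 → Set ℝ := fun c => {t | a < t ∧ (c : ℝ≥0∞) ≤ ENNReal.ofReal (Φ t)}
  have hT : ∀ c, IsUpperSet (T c) := fun c t t' htt' ht =>
    ⟨ht.1.trans_le htt', ht.2.trans (ENNReal.ofReal_le_ofReal (hΦ ht.1 (ht.1.trans_le htt') htt'))⟩
  have hST : ∀ c, S c ⊆ F ⁻¹' T c := fun c x hx =>
    ⟨hFs x hx.2, (congrArg _ (Set.mem_singleton_iff.1 hx.1)).symm.trans_le (hφ x)⟩
  set I := φ.range.filter fun c => μ (S c) ≠ 0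
  have hchoice : ∀ c ∈ I, ∃ t ∈ T c, μ (S c) ≤ 2 * μ (S c ∩ F ⁻¹' Set.Ici t) := fun c hc =>
    exists_mem_measure_le_two_mul_inter_Ici (hT c) ⟨a, fun t ht => ht.1.le⟩ (hST c)
      (Finset.mem_filter.1 hc).2 (measure_ne_top_of_subset Set.inter_subset_right hμs)
  choose! h hhT hh using hchoice
  set B : ℝ≥0 → Set α := fun c => S c ∩ F ⁻¹' Set.Ici (h c)
  refine ⟨I, inferInstance, fun c => B c, fun c => h c, fun c => ⟨?_, ?_, (hhT c c.2).1, ?_⟩,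
    ?_, ?_⟩
  · exact ((φ.measurableSet_preimage _).inter hs).inter (hF measurableSet_Ici)
  · exact Set.inter_subset_left.trans Set.inter_subset_right
  · exact fun x hx => hx.2
  · intro c c' hcc'
    refine ((Set.disjoint_singleton.2 (Subtype.coe_injective.ne hcc')).preimage φ).mono ?_ ?_ <;>
      exact Set.inter_subset_left.trans Set.inter_subset_left
  · rw [Finset.sum_coe_sort I fun c => ENNReal.ofReal (Φ (h c)) * μ (B c)]
    refine (ENNReal.mul_lt_mul_iff_right two_ne_zero ENNReal.ofNat_ne_top).1 ?_
    calc 2 * M < ∑ c ∈ φ.range, c * μ (S c) := hφM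
      _ = ∑ c ∈ I, c * μ (S c) :=
          (Finset.sum_filter_of_ne (p := fun c => μ (S c) ≠ 0) fun c _ hc h0 =>
            hc (by rw [h0, mul_zero])).symm
      _ ≤ ∑ c ∈ I, ENNReal.ofReal (Φ (h c)) * (2 * μ (B c)) :=
          Finset.sum_le_sum fun c hc => mul_le_mul' (hhT c hc).2 (hh c hc)
      _ = 2 * ∑ c ∈ I, ENNReal.ofReal (Φ (h c)) * μ (B c) := by
          rw [Finset.mul_sum]; exact Finset.sum_congr rfl fun c _ => mul_left_comm _ _ _

theorem measure_eq_sum_inter_of_subset_iUnion {κ : Type*} [Fintype κ] {B : Set α}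
    {C : κ → Set α} (hB : MeasurableSet B) (hC : ∀ z, MeasurableSet (C z))
    (hCd : Pairwise (Disjoint on C)) (hBC : B ⊆ ⋃ z, C z) : μ B = ∑ z, μ (B ∩ C z) := by
  conv_lhs => rw [← Set.inter_eq_left.2 hBC, Set.inter_iUnion]
  rw [measure_iUnion (fun z z' h => (hCd h).mono Set.inter_subset_right Set.inter_subset_right)
    fun z => hB.inter (hC z), tsum_fintype]

theorem exists_fin_refinement {ι κ : Type*} [Fintype ι] [Fintype κ] {B : ι → Set α}
    {C : κ → Set α} (hB : ∀ i, MeasurableSet (B i)) (hC : ∀ z, MeasurableSet (C z))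
    (hBd : Pairwise (Disjoint on B)) (hCd : Pairwise (Disjoint on C))
    (hBC : ∀ i, B i ⊆ ⋃ z, C z) :
    ∃ (m : ℕ) (A : Fin m → Set α) (σ : Fin m → ι) (τ : Fin m → κ),
      (∀ j, MeasurableSet (A j) ∧ A j ⊆ B (σ j) ∧ A j ⊆ C (τ j) ∧ 0 < μ (A j)) ∧
      Pairwise (Disjoint on A) ∧ ∀ w : ι → ℝ≥0∞, ∑ j, w (σ j) * μ (A j) = ∑ i, w i * μ (B i) := by
  classical
  set P : ι × κ → Set α := fun p => B p.1 ∩ C p.2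
  have hPd : Pairwise (Disjoint on P) := by
    rintro ⟨i, z⟩ ⟨i', z'⟩ hne
    by_cases hi : i = i'
    · subst hi
      exact (hCd fun hz => hne (Prod.ext rfl hz)).mono Set.inter_subset_right Set.inter_subset_right
    · exact (hBd hi).mono Set.inter_subset_left Set.inter_subset_left
  set J := Finset.univ.filter fun p => μ (P p) ≠ 0
  set e := J.equivFin.symm
  refine ⟨J.card, fun j => P (e j), fun j => (e j).1.1, fun j => (e j).1.2, fun j =>
    ⟨(hB _).inter (hC _), Set.inter_subset_left, Set.inter_subset_right,
      pos_iff_ne_zero.2 (Finset.mem_filter.1 (e j).2).2⟩,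
    hPd.comp_of_injective (Subtype.coe_injective.comp e.injective), fun w => ?_⟩
  calc ∑ j, w (e j).1.1 * μ (P (e j)) = ∑ p ∈ J, w p.1 * μ (P p) :=
        (e.sum_comp fun p : J => w p.1.1 * μ (P p)).trans
          (Finset.sum_coe_sort J fun p => w p.1 * μ (P p))
    _ = ∑ p, w p.1 * μ (P p) := Finset.sum_filter_of_ne fun p _ hp h0 => hp (by rw [h0, mul_zero])
    _ = ∑ i, w i * μ (B i) := by
        rw [Fintype.sum_prod_type]
        refine Finset.sum_congr rfl fun i _ => ?_
        rw [measure_eq_sum_inter_of_subset_iUnion (hB i) hC hCd (hBC i), Finset.mul_sum]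

end Measure

theorem volume_setOf_forall_mem {n : ℕ} (I : Fin n → Set ℝ) :
    volume {x : EucSp n | ∀ i, x i ∈ I i} = ∏ i, volume (I i) := by
  have hpre : {x : EucSp n | ∀ i, x i ∈ I i} =
      (MeasurableEquiv.toLp 2 (Fin n → ℝ)).symm ⁻¹' Set.univ.pi I := by
    ext x; simp
  rw [hpre, (EuclideanSpace.volume_preserving_symm_measurableEquiv_toLp _).measure_preimage_equiv,
    volume_pi_pi]

theorem measurableSet_Gcube (n : ℕ) : MeasurableSet (Gcube n) := by
  have hpre : Gcube n = (MeasurableEquiv.toLp 2 (Fin n → ℝ)).symm ⁻¹'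
      Set.univ.pi fun _ => Set.Ioo 0 1 := by
    ext x; simp [Gcube]
  rw [hpre]
  exact MeasurableEquiv.measurable _ (MeasurableSet.univ_pi fun _ => measurableSet_Ioo)

theorem volume_Gcube (n : ℕ) : volume (Gcube n) = 1 := by
  rw [Gcube, volume_setOf_forall_mem]; simp

def gridIndex (n N : ℕ) (x : EucSp n) : Fin n → ℕ := fun i => ⌊N * x i⌋₊

theorem measurable_gridIndex (n N : ℕ) : Measurable (gridIndex n N) :=
  measurable_pi_lambda _ fun i => Nat.measurable_floor.comp (measurable_const.mul
    ((measurable_pi_apply i).comp (MeasurableEquiv.toLp 2 (Fin n → ℝ)).symm.measurable))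

theorem volume_Gcube_inter_gridIndex_preimage_le {n N : ℕ} (hN : 0 < N) (z : Fin n → ℕ) :
    volume (Gcube n ∩ gridIndex n N ⁻¹' {z}) ≤ ENNReal.ofReal (1 / N) ^ n := by
  have hN' : (0 : ℝ) < N := by exact_mod_cast hN
  have hsub : Gcube n ∩ gridIndex n N ⁻¹' {z} ⊆
      {x : EucSp n | ∀ i, x i ∈ Set.Icc ((z i : ℝ) / N) ((z i + 1) / N)} := by
    rintro x ⟨hx, hxz⟩ i
    have h0 : 0 ≤ N * x i := mul_nonneg hN'.le (hx i).1.le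
    have hzi : ⌊N * x i⌋₊ = z i := congrFun hxz i
    constructor
    · rw [div_le_iff₀ hN', mul_comm, ← hzi]; exact Nat.floor_le h0
    · rw [le_div_iff₀ hN', mul_comm, ← hzi]; exact (Nat.lt_floor_add_one _).le
  refine (measure_mono hsub).trans_eq ?_
  rw [volume_setOf_forall_mem, ← Fin.prod_const]
  refine Finset.prod_congr rfl fun i _ => ?_
  rw [Real.volume_Icc]
  congr 1; field_simp; ring

theorem exists_finite_partition_Gcube {n : ℕ} (hn : 1 ≤ n) {N : ℕ} (hN : 0 < N) :
    ∃ (κ : Type) (_ : Fintype κ) (C : κ → Set (EucSp n)), (∀ z, MeasurableSet (C z)) ∧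
      Pairwise (Disjoint on C) ∧ (∀ z, volume (C z) ≤ ENNReal.ofReal (1 / N)) ∧
      Gcube n ⊆ ⋃ z, C z := by
  classical
  have hN' : (0 : ℝ) < N := by exact_mod_cast hN
  let Z := Fintype.piFinset fun _ : Fin n => Finset.range N
  refine ⟨Z, inferInstance, fun z => Gcube n ∩ gridIndex n N ⁻¹' {z.1}, fun z =>
    (measurableSet_Gcube n).inter (measurable_gridIndex n N (measurableSet_singleton _)),
    fun z z' hzz' => ?_, fun z => ?_, fun x hx => ?_⟩
  · exact ((Set.disjoint_singleton.2 (Subtype.coe_injective.ne hzz')).preimage _).mono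
      Set.inter_subset_right Set.inter_subset_right
  · refine (volume_Gcube_inter_gridIndex_preimage_le hN z.1).trans (pow_le_of_le_one zero_le
      (ENNReal.ofReal_le_one.2 (div_le_one_of_le₀ (by exact_mod_cast hN) hN'.le)) (by omega))
  · have hx' : gridIndex n N x ∈ Z := Fintype.mem_piFinset.2 fun i => Finset.mem_range.2 <|
      (Nat.floor_lt (mul_nonneg hN'.le (hx i).1.le)).2 (mul_lt_of_lt_one_right hN' (hx i).2)
    exact Set.mem_iUnion.2 ⟨⟨_, hx'⟩, hx, rfl⟩

theorem exists_fin_refinement_Gcube {n : ℕ} (hn : 1 ≤ n) {ι : Type*} [Fintype ι]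
    {B : ι → Set (EucSp n)} (hB : ∀ i, MeasurableSet (B i)) (hBd : Pairwise (Disjoint on B))
    (hBG : ∀ i, B i ⊆ Gcube n) {ε : ι → ℝ} (hε : ∀ i, 0 < ε i) :
    ∃ (m : ℕ) (A : Fin m → Set (EucSp n)) (σ : Fin m → ι),
      (∀ j, MeasurableSet (A j) ∧ A j ⊆ B (σ j) ∧ 0 < volume (A j) ∧
        volume (A j) ≤ ENNReal.ofReal (ε (σ j))) ∧
      Pairwise (Disjoint on A) ∧
      ∀ w : ι → ℝ≥0∞, ∑ j, w (σ j) * volume (A j) = ∑ i, w i * volume (B i) := by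
  obtain ⟨N, hNε, hN⟩ := ((Filter.eventually_all.2 fun i =>
    tendsto_one_div_atTop_nhds_zero_nat.eventually (gt_mem_nhds (hε i))).and
    (Filter.eventually_gt_atTop 0)).exists
  obtain ⟨κ, _, C, hC, hCd, hCvol, hGC⟩ := exists_finite_partition_Gcube hn hN
  obtain ⟨m, A, σ, τ, hA, hAd, hsum⟩ :=
    exists_fin_refinement (μ := volume) hB hC hBd hCd fun i => (hBG i).trans hGC
  refine ⟨m, A, σ, fun j => ⟨(hA j).1, (hA j).2.1, (hA j).2.2.2, ?_⟩, hAd, hsum⟩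
  exact (measure_mono (hA j).2.2.1).trans ((hCvol _).trans (ENNReal.ofReal_le_ofReal (hNε _).le))

theorem stmt4 {n : ℕ} (hn : 2 ≤ n)
    (Φ : ℝ → ℝ) (hΦmono : MonotoneOn Φ (Set.Ioi 0)) (hΦpos : ∀ t : ℝ, 0 < t → 0 < Φ t)
    (f : EucSp n → ℝ) (hf : MemL f) (k : ℕ) (hk : 1 ≤ k)
    (hnot : ∫⁻ x in {x | f x ≠ 0}, ENNReal.ofReal (Φ (|f x| / k)) = ⊤)
    (α : ℝ → ℝ) (hα : ∀ t : ℝ, 1 < t → 0 < α t) :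
    ∃ (m : ℕ) (A : Fin m → Set (EucSp n)) (h : Fin m → ℝ),
      (∀ j, MeasurableSet (A j) ∧ A j ⊆ Gcube n) ∧
      (∀ i j, i ≠ j → A i ∩ A j = ∅) ∧
      (∀ j, (k : ℝ) < h j) ∧ (∀ j, ∀ x ∈ A j, h j ≤ |f x|) ∧
      (∀ j, 0 < volume (A j) ∧ volume (A j) ≤ ENNReal.ofReal (α (h j / k))) ∧
      (k : ℝ) < ∑ j, Φ (h j / k) * (volume (A j)).toReal := by
  obtain ⟨hfi, hfG⟩ := hf
  have hk0 : (0 : ℝ) < k := by exact_mod_cast hk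
  obtain ⟨g, hg, s, hs, hsf, hgf, hint⟩ :=
    hfi.aemeasurable.exists_measurable_setLIntegral_support_eq fun t => ENNReal.ofReal (Φ (|t| / k))
  rw [hnot] at hint
  have hsG : s ⊆ Gcube n := hsf.trans hfG
  have hF : Measurable fun x => |g x| / k := hg.abs.div_const _
  have hμs : volume s ≠ ∞ := measure_ne_top_of_subset hsG (by simp [volume_Gcube])
  have hF0 : ∀ x ∈ s, 0 < |g x| / k := fun x hx =>
    div_pos (abs_pos.2 ((hgf x hx).trans_ne (hsf hx))) hk0
  obtain ⟨ι, _, B, h, hB, hBd, hsum⟩ := exists_disjoint_lt_sum_of_setLIntegral_eq_top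
    (hΦmono.mono (Set.Ioi_subset_Ioi zero_le_one)) hF
    (hs.inter (measurableSet_lt measurable_const hF))
    (measure_ne_top_of_subset Set.inter_subset_left hμs) (fun x hx => hx.2)
    (setLIntegral_inter_lt_eq_top hΦmono hF hμs hF0 hint 1) (ENNReal.natCast_ne_top k)
  have hBs : ∀ i, B i ⊆ s := fun i => (hB i).2.1.trans Set.inter_subset_left
  have hh1 : ∀ i, 1 < h i := fun i => (hB i).2.2.1
  obtain ⟨m, A, σ, hA, hAd, hAsum⟩ := exists_fin_refinement_Gcube (by omega)
    (fun i => (hB i).1) hBd (fun i => (hBs i).trans hsG) (fun i => hα _ (hh1 i))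
  refine ⟨m, A, fun j => k * h (σ j), fun j => ⟨(hA j).1, (hA j).2.1.trans ((hBs _).trans hsG)⟩,
    fun i j hij => (hAd hij).inter_eq, fun j => lt_mul_of_one_lt_right hk0 (hh1 _),
    fun j x hx => ?_, ?_, ?_⟩ <;> simp only [mul_div_cancel_left₀ _ hk0.ne']
  · rw [← hgf x (hBs _ ((hA j).2.1 hx)), ← le_div_iff₀' hk0]
    exact (hB _).2.2.2 x ((hA j).2.1 hx)
  · exact fun j => ⟨(hA j).2.2.1, (hA j).2.2.2⟩
  · rw [← ENNReal.toReal_natCast k]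
    refine ENNReal.toReal_lt_sum_mul_toReal (fun j => (hΦpos _ (zero_lt_one.trans (hh1 _))).le)
      (fun j => ne_top_of_le_ne_top ENNReal.ofReal_ne_top (hA j).2.2.2) ?_
    exact hsum.trans_eq (hAsum fun i => ENNReal.ofReal (Φ (h i))).symm

end
end

section
/- Let n ≥ 2 and let Δ be a non-empty family of subsets of ℝⁿ that are uniformly measurable in Jordan sense, with inf_{E∈Δ} |E| > 0. Then for every ε > 0 there exists m₀ ∈ ℕⁿ such that for every E ∈ Δ and every m ≥ m₀ (componentwise): |⋃{Q ∈ W_m : Q ⊂ E}| > (1−ε)|E| and |⋃{Q ∈ W_m : Q ∩ E ≠ ∅}| < (1+ε)|E|. -/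
open MeasureTheory Set Filter Topology Metric ENNReal

noncomputable section

/-- `Δ` consists of sets uniformly measurable in Jordan sense. -/
def UnifJordan {n : ℕ} (Δ : Set (Set (EucSp n))) : Prop :=
  ∀ ε : ℝ, 0 < ε → ∃ (k : ℕ) (r : ℝ), 0 < r ∧ (k : ℝ) * r ^ n < ε ∧
    ∀ E ∈ Δ, ∃ c : Fin k → EucSp n, frontier E ⊆ ⋃ i, Metric.ball (c i) r

/-!
A dyadic cube that meets `E` without lying in it is connected, hence meets `∂E`; once its
diameter `√n · 2^(-min m)` is at most `r`, it lies in the union `U` of the doubled balls of a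
Jordan cover of `∂E`. So, up to the null grid of dyadic hyperplanes, `E` is contained in the inner
dyadic union together with `U`, and the outer dyadic union in `E ∪ U`. Finally
`|U| ≤ 2ⁿ |B(0,1)| k rⁿ` is small uniformly in `E`, compared with `inf |E| ≥ t > 0`.
-/

theorem IsPreconnected.inter_frontier_nonempty {X : Type*} [TopologicalSpace X] {s t : Set X}
    (hs : IsPreconnected s) (hst : (s ∩ t).Nonempty) (hts : ¬ s ⊆ t) :
    (s ∩ frontier t).Nonempty := by
  by_contra h
  rw [not_nonempty_iff_eq_empty, ← disjoint_iff_inter_eq_empty] at h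
  have hcover : s ⊆ interior t ∪ (closure t)ᶜ := fun x hx => by
    by_cases hc : x ∈ closure t
    · exact Or.inl (by_contra fun hi => h.ne_of_mem hx ⟨hc, hi⟩ rfl)
    · exact Or.inr hc
  obtain ⟨x, hxs, hxt⟩ := hst
  have hxi : x ∈ interior t := (hcover hxs).resolve_right (not_not.2 (subset_closure hxt))
  exact hts ((hs.subset_left_of_subset_union isOpen_interior isClosed_closure.isOpen_compl
    (disjoint_compl_right.mono_left interior_subset_closure) hcover ⟨x, hxs, hxi⟩).trans
    interior_subset)

theorem EuclideanSpace.dist_le_sqrt_card_mul {ι : Type*} [Fintype ι] {x y : EuclideanSpace ℝ ι}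
    {δ : ℝ} (hδ : 0 ≤ δ) (hxy : ∀ i, dist (x i) (y i) ≤ δ) :
    dist x y ≤ √(Fintype.card ι) * δ := by
  calc dist x y = √(∑ i, dist (x i) (y i) ^ 2) := EuclideanSpace.dist_eq x y
    _ ≤ √(∑ _ : ι, δ ^ 2) := by gcongr with i; exact hxy i
    _ = √(Fintype.card ι) * δ := by
      rw [Finset.sum_const, Finset.card_univ, nsmul_eq_mul, Real.sqrt_mul (Nat.cast_nonneg _),
        Real.sqrt_sq hδ]

theorem EuclideanSpace.volume_setOf_apply_eq {ι : Type*} [Fintype ι] (j : ι) (c : ℝ) :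
    volume {x : EuclideanSpace ℝ ι | x j = c} = 0 := by
  change volume ((MeasurableEquiv.toLp 2 (ι → ℝ)).symm ⁻¹' {f | f j = c}) = 0
  rw [(EuclideanSpace.volume_preserving_symm_measurableEquiv_toLp ι).measure_preimage
    (measurableSet_eq_fun (measurable_pi_apply j) measurable_const).nullMeasurableSet, volume_pi]
  exact Measure.pi_hyperplane (fun _ => (volume : Measure ℝ)) j c

theorem volume_iUnion_ball_le {n k : ℕ} (c : Fin k → EucSp n) {ρ : ℝ} (hρ : 0 < ρ) :
    volume (⋃ i, ball (c i) ρ) ≤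
      k * (ENNReal.ofReal (ρ ^ n) * volume (ball (0 : EucSp n) 1)) := by
  calc volume (⋃ i, ball (c i) ρ) ≤ ∑ i, volume (ball (c i) ρ) := measure_iUnion_fintype_le _ _
    _ = k * (ENNReal.ofReal (ρ ^ n) * volume (ball (0 : EucSp n) 1)) := by
      simp only [Measure.addHaar_ball_of_pos _ _ hρ, finrank_euclideanSpace_fin,
        Finset.sum_const, Finset.card_univ, Fintype.card_fin, nsmul_eq_mul]

theorem UnifJordan.exists_cover {n : ℕ} {Δ : Set (Set (EucSp n))} (hJ : UnifJordan Δ) {δ : ℝ}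
    (hδ : 0 < δ) : ∃ r > 0, ∃ k : ℕ, ∀ E ∈ Δ, ∃ c : Fin k → EucSp n,
      frontier E ⊆ ⋃ i, ball (c i) r ∧ volume (⋃ i, ball (c i) (2 * r)) < ENNReal.ofReal δ := by
  set K := (volume (ball (0 : EucSp n) 1)).toReal
  have hC : 0 < 2 ^ n * K + 1 := by positivity
  obtain ⟨k, r, hr, hkr, hcov⟩ := hJ (δ / (2 ^ n * K + 1)) (by positivity)
  refine ⟨r, hr, k, fun E hE => ?_⟩
  obtain ⟨c, hc⟩ := hcov E hE
  refine ⟨c, hc, (volume_iUnion_ball_le c (by positivity)).trans_lt ?_⟩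
  rw [← ENNReal.ofReal_toReal measure_ball_lt_top.ne, ← ENNReal.ofReal_natCast,
    ← ENNReal.ofReal_mul (by positivity), ← ENNReal.ofReal_mul (by positivity),
    ENNReal.ofReal_lt_ofReal_iff hδ]
  calc (k : ℝ) * ((2 * r) ^ n * K) = 2 ^ n * K * (k * r ^ n) := by ring
    _ ≤ (2 ^ n * K + 1) * (k * r ^ n) := by gcongr; linarith
    _ < (2 ^ n * K + 1) * (δ / (2 ^ n * K + 1)) := by gcongr
    _ = δ := mul_div_cancel₀ _ hC.ne'

section Dyadic

variable {n : ℕ}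

def dyadicCube (m : Fin n → ℕ) (k : Fin n → ℤ) : Set (EucSp n) :=
  {x | ∀ j, (k j : ℝ) / 2 ^ (m j) < x j ∧ x j < ((k j : ℝ) + 1) / 2 ^ (m j)}

def dyadicGrid (m : Fin n → ℕ) : Set (EucSp n) :=
  {x | ∃ j, ∃ z : ℤ, x j = (z : ℝ) / 2 ^ m j}

theorem dyadicW_eq_range (m : Fin n → ℕ) : dyadicW m = range (dyadicCube m) := by
  ext S
  simp only [dyadicW, dyadicCube, mem_ofPred_eq, mem_range, eq_comm]

theorem convex_dyadicCube (m : Fin n → ℕ) (k : Fin n → ℤ) : Convex ℝ (dyadicCube m k) := by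
  have h : dyadicCube m k = ⋂ j, (EuclideanSpace.proj j : EucSp n →L[ℝ] ℝ) ⁻¹'
      Ioo ((k j : ℝ) / 2 ^ (m j)) (((k j : ℝ) + 1) / 2 ^ (m j)) := by
    ext x
    simp [dyadicCube]
  rw [h]
  exact convex_iInter fun j => (convex_Ioo _ _).linear_preimage _

theorem dist_le_of_mem_dyadicCube {m : Fin n → ℕ} {M : ℕ} (hm : ∀ j, M ≤ m j) {k : Fin n → ℤ}
    {x y : EucSp n} (hx : x ∈ dyadicCube m k) (hy : y ∈ dyadicCube m k) :
    dist x y ≤ √n / 2 ^ M := by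
  have hcoord : ∀ j, dist (x j) (y j) ≤ 1 / 2 ^ M := fun j => by
    have hside : ((k j : ℝ) + 1) / 2 ^ m j = (k j : ℝ) / 2 ^ m j + 1 / 2 ^ m j := by ring
    have hxj := hx j
    have hyj := hy j
    rw [hside] at hxj hyj
    calc dist (x j) (y j) ≤ 1 / 2 ^ m j := by
          rw [Real.dist_eq, abs_le]; constructor <;> linarith
      _ ≤ 1 / 2 ^ M := by gcongr; exacts [one_le_two, hm j]
  simpa [div_eq_mul_inv] using EuclideanSpace.dist_le_sqrt_card_mul (by positivity) hcoord

theorem volume_dyadicGrid (m : Fin n → ℕ) : volume (dyadicGrid m) = 0 := by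
  have hsub : dyadicGrid m ⊆ ⋃ (j : Fin n) (z : ℤ), {x : EucSp n | x j = (z : ℝ) / 2 ^ m j} := by
    rintro x ⟨j, z, hz⟩
    exact mem_iUnion₂.2 ⟨j, z, hz⟩
  exact measure_mono_null hsub <| measure_iUnion_null fun j => measure_iUnion_null fun _ =>
    EuclideanSpace.volume_setOf_apply_eq j _

theorem mem_dyadicCube_floor {m : Fin n → ℕ} {x : EucSp n} (hx : x ∉ dyadicGrid m) :
    x ∈ dyadicCube m (fun j => ⌊x j * 2 ^ m j⌋) := fun j => by
  have hpos : (0 : ℝ) < 2 ^ m j := by positivity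
  have hne : (⌊x j * 2 ^ m j⌋ : ℝ) ≠ x j * 2 ^ m j := fun heq =>
    hx ⟨j, ⌊x j * 2 ^ m j⌋, by rw [heq, mul_div_cancel_right₀ _ hpos.ne']⟩
  exact ⟨(div_lt_iff₀ hpos).2 ((Int.floor_le _).lt_of_ne hne),
    (lt_div_iff₀ hpos).2 (Int.lt_floor_add_one _)⟩

section Cover

variable {ι : Type*} {E : Set (EucSp n)} {c : ι → EucSp n} {r : ℝ} {m : Fin n → ℕ} {M : ℕ}
  (hE : frontier E ⊆ ⋃ i, ball (c i) r) (hm : ∀ j, M ≤ m j) (hr : √n / 2 ^ M ≤ r)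
include hE hm hr

theorem dyadicCube_subset_iUnion_ball {k : Fin n → ℤ} (hmeet : (dyadicCube m k ∩ E).Nonempty)
    (hnot : ¬ dyadicCube m k ⊆ E) : dyadicCube m k ⊆ ⋃ i, ball (c i) (2 * r) := by
  obtain ⟨y, hyQ, hyE⟩ :=
    (convex_dyadicCube m k).isPreconnected.inter_frontier_nonempty hmeet hnot
  obtain ⟨i, hi⟩ := mem_iUnion.1 (hE hyE)
  intro x hxQ
  refine mem_iUnion.2 ⟨i, ?_⟩
  calc dist x (c i) ≤ dist x y + dist y (c i) := dist_triangle _ _ _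
    _ < r + r := add_lt_add_of_le_of_lt ((dist_le_of_mem_dyadicCube hm hxQ hyQ).trans hr) hi
    _ = 2 * r := by ring

theorem volume_le_volume_sUnion_subset_add :
    volume E ≤ volume (⋃₀ {Q | Q ∈ dyadicW m ∧ Q ⊆ E}) + volume (⋃ i, ball (c i) (2 * r)) := by
  have hsub : E ⊆ ⋃₀ {Q | Q ∈ dyadicW m ∧ Q ⊆ E} ∪ (dyadicGrid m ∪ ⋃ i, ball (c i) (2 * r)) := by
    intro x hxE
    by_cases hxG : x ∈ dyadicGrid m
    · exact Or.inr (Or.inl hxG)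
    have hxQ := mem_dyadicCube_floor hxG
    by_cases hQE : dyadicCube m (fun j => ⌊x j * 2 ^ m j⌋) ⊆ E
    · exact Or.inl ⟨_, ⟨dyadicW_eq_range m ▸ mem_range_self _, hQE⟩, hxQ⟩
    · exact Or.inr (Or.inr (dyadicCube_subset_iUnion_ball hE hm hr ⟨x, hxQ, hxE⟩ hQE hxQ))
  calc volume E
      ≤ volume (⋃₀ {Q | Q ∈ dyadicW m ∧ Q ⊆ E}) +
          (volume (dyadicGrid m) + volume (⋃ i, ball (c i) (2 * r))) := by
        refine (measure_mono hsub).trans ((measure_union_le _ _).trans ?_)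
        gcongr
        exact measure_union_le _ _
    _ = volume (⋃₀ {Q | Q ∈ dyadicW m ∧ Q ⊆ E}) + volume (⋃ i, ball (c i) (2 * r)) := by
        rw [volume_dyadicGrid, zero_add]

theorem volume_sUnion_inter_nonempty_le :
    volume (⋃₀ {Q | Q ∈ dyadicW m ∧ (Q ∩ E).Nonempty}) ≤
      volume E + volume (⋃ i, ball (c i) (2 * r)) := by
  refine (measure_mono ?_).trans (measure_union_le _ _)
  rintro x ⟨Q, ⟨hQ, hmeet⟩, hxQ⟩
  rw [dyadicW_eq_range] at hQ
  obtain ⟨k, rfl⟩ := hQ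
  by_cases hQE : dyadicCube m k ⊆ E
  · exact Or.inl (hQE hxQ)
  · exact Or.inr (dyadicCube_subset_iUnion_ball hE hm hr hmeet hQE hxQ)

end Cover

end Dyadic

section Arithmetic

variable {e u : ℝ≥0∞} {η ε : ℝ}

theorem ofReal_one_sub_mul_lt {a : ℝ≥0∞} (hη : 0 ≤ η) (hη1 : η ≤ 1) (hηε : η ≤ ε)
    (he : e ≠ ⊤) (hu : u < ENNReal.ofReal η * e) (ha : e ≤ a + u) :
    ENNReal.ofReal (1 - ε) * e < a := by
  have hηe : ENNReal.ofReal η * e ≤ e :=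
    mul_le_of_le_one_left' (ENNReal.ofReal_le_one.2 hη1)
  calc ENNReal.ofReal (1 - ε) * e ≤ ENNReal.ofReal (1 - η) * e := by gcongr
    _ = e - ENNReal.ofReal η * e := by
      rw [ENNReal.ofReal_sub _ hη, ENNReal.ofReal_one, ENNReal.sub_mul fun _ _ => he, one_mul]
    _ < a := by
      rcases eq_or_ne a ⊤ with rfl | ha_top
      · exact ENNReal.sub_lt_of_lt_add hηe (by simpa using he.lt_top)
      · exact ENNReal.sub_lt_of_lt_add hηe (ha.trans_lt (ENNReal.add_lt_add_left ha_top hu))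

theorem lt_ofReal_one_add_mul {b : ℝ≥0∞} (hη : 0 ≤ η) (hηε : η ≤ ε) (he : e ≠ ⊤)
    (hu : u < ENNReal.ofReal η * e) (hb : b ≤ e + u) : b < ENNReal.ofReal (1 + ε) * e :=
  calc b < e + ENNReal.ofReal η * e := hb.trans_lt (ENNReal.add_lt_add_left he hu)
    _ ≤ e + ENNReal.ofReal ε * e := by gcongr
    _ = ENNReal.ofReal (1 + ε) * e := by
      rw [ENNReal.ofReal_add zero_le_one (hη.trans hηε), ENNReal.ofReal_one, add_mul, one_mul]

end Arithmetic

theorem stmt8_general {n : ℕ} (Δ : Set (Set (EucSp n)))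
    (hbdd : ∀ E ∈ Δ, Bornology.IsBounded E)
    (hJ : UnifJordan Δ) (t : ℝ) (ht : 0 < t)
    (hinf : ∀ E ∈ Δ, ENNReal.ofReal t ≤ volume E) :
    ∀ ε : ℝ, 0 < ε → ∃ m₀ : Fin n → ℕ, ∀ E ∈ Δ, ∀ m : Fin n → ℕ, m₀ ≤ m →
      ENNReal.ofReal (1 - ε) * volume E < volume (⋃₀ {Q | Q ∈ dyadicW m ∧ Q ⊆ E}) ∧
      volume (⋃₀ {Q | Q ∈ dyadicW m ∧ (Q ∩ E).Nonempty}) < ENNReal.ofReal (1 + ε) * volume E := by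
  intro ε hε
  set η := min ε 1
  have hη : 0 ≤ η := le_min hε.le zero_le_one
  obtain ⟨r, hr, k, hcover⟩ := hJ.exists_cover (δ := η * t) (by positivity)
  obtain ⟨M, hM⟩ : ∃ M : ℕ, √n / 2 ^ M ≤ r := by
    obtain ⟨M, hM⟩ := pow_unbounded_of_one_lt (√n / r) one_lt_two
    exact ⟨M, (div_le_iff₀ (by positivity)).2 (by rw [div_lt_iff₀ hr] at hM; linarith)⟩
  refine ⟨fun _ => M, fun E hE m hm => ?_⟩
  obtain ⟨c, hfrontier, hvol⟩ := hcover E hE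
  have hfin : volume E ≠ ⊤ := (hbdd E hE).measure_lt_top.ne
  have hsmall : volume (⋃ i, ball (c i) (2 * r)) < ENNReal.ofReal η * volume E :=
    hvol.trans_le (by rw [ENNReal.ofReal_mul hη]; gcongr; exact hinf E hE)
  exact ⟨ofReal_one_sub_mul_lt hη (min_le_right _ _) (min_le_left _ _) hfin hsmall
      (volume_le_volume_sUnion_subset_add hfrontier hm hM),
    lt_ofReal_one_add_mul hη (min_le_left _ _) hfin hsmall
      (volume_sUnion_inter_nonempty_le hfrontier hm hM)⟩

theorem stmt8 {n : ℕ} (hn : 2 ≤ n) (Δ : Set (Set (EucSp n))) (hne : Δ.Nonempty)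
    (hmeas : ∀ E ∈ Δ, MeasurableSet E) (hbdd : ∀ E ∈ Δ, Bornology.IsBounded E)
    (hJ : UnifJordan Δ) (t : ℝ) (ht : 0 < t)
    (hinf : ∀ E ∈ Δ, ENNReal.ofReal t ≤ volume E) :
    ∀ ε : ℝ, 0 < ε → ∃ m₀ : Fin n → ℕ, ∀ E ∈ Δ, ∀ m : Fin n → ℕ, m₀ ≤ m →
      ENNReal.ofReal (1 - ε) * volume E < volume (⋃₀ {Q | Q ∈ dyadicW m ∧ Q ⊆ E}) ∧
      volume (⋃₀ {Q | Q ∈ dyadicW m ∧ (Q ∩ E).Nonempty}) < ENNReal.ofReal (1 + ε) * volume E :=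
  stmt8_general Δ hbdd hJ t ht hinf
end
end

section
/- Let n ≥ 2 and let B be a translation invariant differentiation basis in ℝⁿ. Then the family Δ(B) = {B(γ) : γ ∈ Γ_n} of all rotated copies of B has the M_{Φ_B}-property. -/
open MeasureTheory Set Filter Topology Metric ENNReal

noncomputable section

/-!
Fix `h > 1`. Choose `t ≥ 0` such that, for arbitrarily small `r`, the level set
`U = {M_B^{(tr)}(h χ_{V_r}) > 1}` has measure at least `Φ_B(h) |V_r| / 2`. Translation invariance
makes `x ↦ |V_r ∩ (x + I)|` lower semicontinuous, so `U` is open; it lies in the ball of radius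
`(1 + t) r`, and the level set of the rotated basis `B(γ)` is `γ U`. Take a compact `K ⊆ U` with
`|K| > |U| / 2` and a `δ`-neighbourhood of `K` inside `U`: every dyadic cube of diameter `< δ`
meeting `γ K` lies in `γ U`, so a single dyadic order serves all rotations, and the union
`P_{B(γ)}` of the dyadic cubes inside `γ U` has measure `≥ |K| ≥ Φ_B(h) |V_r| / 4`.
With `E = V_r` and `Q` the cube of half-side `(1 + t) r`, the ratio `|E| / |Q|` depends on `t`
only; it gives `c(h)`.
-/

open scoped Pointwise symmDiff

theorem LinearIsometryEquiv.volume_image {E : Type*} [NormedAddCommGroup E]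
    [InnerProductSpace ℝ E] [FiniteDimensional ℝ E] [MeasurableSpace E] [BorelSpace E]
    (γ : E ≃ₗᵢ[ℝ] E) (S : Set E) : volume (γ '' S) = volume S := by
  rw [γ.image_eq_preimage_symm]
  exact γ.symm.measurePreserving.measure_preimage_emb γ.symm.toHomeomorph.measurableEmbedding S

lemma lowerSemicontinuous_measure_inter_vadd {G : Type*} [AddGroup G] [TopologicalSpace G]
    [IsTopologicalAddGroup G] [MeasurableSpace G] [BorelSpace G] (μ : Measure G)
    [μ.IsAddLeftInvariant] [μ.InnerRegularCompactLTTop] [IsLocallyFiniteMeasure μ] (V : Set G)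
    {I : Set G} (hI : NullMeasurableSet I μ) (hIfin : μ I ≠ ∞) :
    LowerSemicontinuous fun x : G => μ (V ∩ (x +ᵥ I)) := by
  intro x₀ y hy
  let τ : C(G, C(G, G)) := ContinuousMap.curry ⟨fun p => -p.1 + p.2, by fun_prop⟩
  have hτ : ∀ x, ⇑(τ x) ⁻¹' I = x +ᵥ I := fun x => by
    ext z; simp [τ, mem_vadd_set_iff_neg_vadd_mem]
  have hlim := tendsto_measure_symmDiff_preimage_nhds_zero (τ.continuous.tendsto x₀)
    (.of_forall fun x => measurePreserving_add_left μ (-x))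
    (measurePreserving_add_left μ (-x₀)) hI hIfin
  simp only [hτ] at hlim
  filter_upwards [hlim.eventually (gt_mem_nhds (tsub_pos_of_lt hy))] with x hx
  by_contra! hle
  refine (hx.trans_le' ?_).false
  calc μ (V ∩ (x₀ +ᵥ I)) - y ≤ μ (V ∩ (x₀ +ᵥ I)) - μ (V ∩ (x +ᵥ I)) := tsub_le_tsub_left hle _
    _ ≤ μ ((V ∩ (x₀ +ᵥ I)) ∆ (V ∩ (x +ᵥ I))) := le_measure_symmDiff
    _ ≤ μ ((x +ᵥ I) ∆ (x₀ +ᵥ I)) := by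
        rw [← inter_symmDiff_distrib_left, symmDiff_comm]
        exact measure_mono inter_subset_right

lemma exists_frequently_ofReal_half_le_of_limsup {α : Type*} {l : Filter α} [l.NeBot]
    (f : ℝ → α → ℝ≥0∞) :
    ∃ t ≥ (0 : ℝ), ∃ᶠ r in l,
      ENNReal.ofReal ((limsup (fun t => limsup (f t) l) atTop).toReal / 2) ≤ f t r := by
  set L := limsup (fun t => limsup (f t) l) atTop
  rcases (ENNReal.toReal_nonneg (a := L)).eq_or_lt with hL | hL
  -- `L = 0` or `L = ∞`: the bound `ofReal (L.toReal / 2)` is `0`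
  · exact ⟨0, le_rfl, .of_forall fun _ => by simp [← hL]⟩
  have hlt : ENNReal.ofReal (L.toReal / 2) < L :=
    (ENNReal.ofReal_lt_ofReal_iff hL |>.2 (half_lt_self hL)).trans_eq
      (ENNReal.ofReal_toReal (ENNReal.toReal_pos_iff.1 hL).2.ne)
  obtain ⟨t, ht, ht0⟩ := ((frequently_lt_of_lt_limsup isCobounded_le_of_bot hlt).and_eventually
    (eventually_ge_atTop 0)).exists
  exact ⟨t, ht0, (frequently_lt_of_lt_limsup isCobounded_le_of_bot ht).mono fun _ => le_of_lt⟩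

section

variable {n : ℕ}

lemma maxTrunc_mono (C : BasisMap n) {s₁ s₂ : ℝ} (hs : s₁ ≤ s₂) (f : EucSp n → ℝ)
    (x : EucSp n) : maxTrunc C s₁ f x ≤ maxTrunc C s₂ f x :=
  iSup₂_mono' fun R hR => ⟨R, ⟨hR.1, hR.2.trans_le hs⟩, le_rfl⟩

lemma maxTrunc_of_eq_image {C : BasisMap n} {x : EucSp n} {F : Set (EucSp n) → Set (EucSp n)}
    {S : Set (Set (EucSp n))} (hC : C x = F '' S) (s : ℝ) (f : EucSp n → ℝ) :
    maxTrunc C s f x = ⨆ (I : Set (EucSp n)) (_ : I ∈ S ∧ diam (F I) < s),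
      (∫⁻ y in F I, ENNReal.ofReal |f y|) / volume (F I) := by
  simp only [maxTrunc, hC]
  apply le_antisymm
  · refine iSup₂_le ?_
    rintro _ ⟨⟨I, hI, rfl⟩, hd⟩
    exact le_iSup₂_of_le (f := fun I (_ : I ∈ S ∧ diam (F I) < s) => _) I ⟨hI, hd⟩ le_rfl
  · exact iSup₂_le fun I hI => le_iSup₂_of_le (F I) ⟨⟨I, hI.1, rfl⟩, hI.2⟩ le_rfl

lemma maxTrunc_eq_iSup_vadd {B : BasisMap n} (hTI : IsTIBasis B) (s : ℝ) (f : EucSp n → ℝ)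
    (x : EucSp n) :
    maxTrunc B s f x = ⨆ (I : Set (EucSp n)) (_ : I ∈ B 0 ∧ diam I < s),
      (∫⁻ y in x +ᵥ I, ENNReal.ofReal |f y|) / volume I := by
  simp only [maxTrunc_of_eq_image (F := (x +ᵥ ·)) (hTI x), diam_vadd, measure_vadd]

lemma rotateBasis_eq_image {B : BasisMap n} (hTI : IsTIBasis B) (γ : EucSp n ≃ₗᵢ[ℝ] EucSp n)
    (x : EucSp n) : rotateBasis B γ x = (fun I => γ '' (γ.symm x +ᵥ I)) '' B 0 := by
  rw [rotateBasis, hTI x, image_image]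
  refine image_congr fun I _ => ?_
  simp only [← image_vadd, image_image, vadd_eq_add, map_add,
    LinearIsometryEquiv.apply_symm_apply, add_sub_cancel_left]

lemma maxTrunc_rotateBasis {B : BasisMap n} (hTI : IsTIBasis B) (γ : EucSp n ≃ₗᵢ[ℝ] EucSp n)
    (s : ℝ) (f : EucSp n → ℝ) (x : EucSp n) :
    maxTrunc (rotateBasis B γ) s f x = maxTrunc B s (f ∘ γ) (γ.symm x) := by
  simp only [maxTrunc_of_eq_image (rotateBasis_eq_image hTI γ x), maxTrunc_eq_iSup_vadd hTI,
    γ.isometry.diam_image, diam_vadd, ← γ.measurePreserving.setLIntegral_comp_emb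
      γ.toHomeomorph.measurableEmbedding, Function.comp_apply, γ.volume_image, measure_vadd]

lemma setLIntegral_ofReal_abs_indFun {V : Set (EucSp n)} (hV : MeasurableSet V) {h : ℝ}
    (hh : 0 ≤ h) (R : Set (EucSp n)) :
    ∫⁻ y in R, ENNReal.ofReal |indFun V h y| = ENNReal.ofReal h * volume (V ∩ R) := by
  have : (fun y => ENNReal.ofReal |indFun V h y|) = V.indicator fun _ => ENNReal.ofReal h := by
    ext y
    by_cases hy : y ∈ V <;> simp [indFun, hy, abs_of_nonneg hh]
  rw [this, lintegral_indicator_const hV, Measure.restrict_apply hV]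

lemma lowerSemicontinuous_maxTrunc_indFun {B : BasisMap n} (hB : IsDiffBasis B)
    (hTI : IsTIBasis B) (s : ℝ) {V : Set (EucSp n)} (hV : MeasurableSet V) {h : ℝ}
    (hh : 0 ≤ h) : LowerSemicontinuous (maxTrunc B s (indFun V h)) := by
  simp only [funext (maxTrunc_eq_iSup_vadd hTI s _), setLIntegral_ofReal_abs_indFun hV hh]
  refine lowerSemicontinuous_biSup fun I hI => ?_
  obtain ⟨-, hIb, hIm, hIpos⟩ := (hB 0).1 I hI.1
  refine Continuous.comp_lowerSemicontinuous (g := fun a => ENNReal.ofReal h * a / volume I) ?_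
    (lowerSemicontinuous_measure_inter_vadd volume V hIm.nullMeasurableSet
      hIb.measure_lt_top.ne) fun a b hab => ENNReal.div_le_div_right (mul_le_mul_right hab _) _
  exact (ENNReal.continuous_div_const _ hIpos.ne').comp
    (ENNReal.continuous_const_mul ENNReal.ofReal_ne_top)

lemma setOf_pos_maxTrunc_subset_thickening_support {B : BasisMap n} (hB : IsDiffBasis B)
    (s : ℝ) (f : EucSp n → ℝ) :
    {x | 0 < maxTrunc B s f x} ⊆ thickening s (Function.support f) := by
  intro x hx
  simp only [mem_ofPred_eq, maxTrunc, lt_iSup_iff] at hx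
  obtain ⟨R, ⟨hRB, hRs⟩, hpos⟩ := hx
  obtain ⟨hxR, hRb, hRm, -⟩ := (hB x).1 R hRB
  obtain ⟨y, hyR, hy⟩ : ∃ y ∈ R, f y ≠ 0 := by
    by_contra! h0
    rw [setLIntegral_congr_fun (g := fun _ => 0) hRm fun y hy => by simp [h0 y hy],
      lintegral_zero, ENNReal.zero_div] at hpos
    exact hpos.false
  exact mem_thickening_iff.2 ⟨y, hy, (dist_le_diam_of_mem hRb hxR hyR).trans_lt hRs⟩

lemma setOf_one_lt_maxTrunc_indFun_ball_subset {B : BasisMap n} (hB : IsDiffBasis B)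
    (s r h : ℝ) : {x | 1 < maxTrunc B s (indFun (ball (0 : EucSp n) r) h) x} ⊆ ball 0 (s + r) := by
  intro x hx
  have hx0 : 0 < maxTrunc B s (indFun (ball 0 r) h) x := zero_lt_one.trans hx
  exact thickening_ball _ s r <| thickening_subset_of_subset _ support_indicator_subset <|
    setOf_pos_maxTrunc_subset_thickening_support hB _ _ hx0

lemma indFun_ball_comp_linearIsometryEquiv (γ : EucSp n ≃ₗᵢ[ℝ] EucSp n) (r h : ℝ) :
    indFun (ball (0 : EucSp n) r) h ∘ γ = indFun (ball 0 r) h := by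
  ext x
  simp only [indFun, Function.comp_apply, Set.indicator, mem_ball_zero_iff, γ.norm_map]

lemma setOf_lt_maxTrunc_rotateBasis_indFun_ball {B : BasisMap n} (hTI : IsTIBasis B)
    (γ : EucSp n ≃ₗᵢ[ℝ] EucSp n) (a : ℝ≥0∞) (s r h : ℝ) :
    {x | a < maxTrunc (rotateBasis B γ) s (indFun (ball 0 r) h) x} =
      γ '' {x | a < maxTrunc B s (indFun (ball 0 r) h) x} := by
  ext x
  simp only [γ.image_eq_preimage_symm, mem_preimage, mem_ofPred_eq, maxTrunc_rotateBasis hTI,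
    indFun_ball_comp_linearIsometryEquiv]

lemma norm_le_sqrt_mul_of_forall_abs_le {x : EucSp n} {a : ℝ} (ha : 0 ≤ a)
    (hx : ∀ j, |x j| ≤ a) : ‖x‖ ≤ √n * a := by
  rw [EuclideanSpace.norm_eq, ← Real.sqrt_sq ha, ← Real.sqrt_mul n.cast_nonneg]
  refine Real.sqrt_le_sqrt ?_
  calc ∑ j, ‖x j‖ ^ 2 ≤ ∑ _j : Fin n, a ^ 2 :=
        Finset.sum_le_sum fun j _ => pow_le_pow_left₀ (norm_nonneg _) (hx j) 2
    _ = n * a ^ 2 := by simp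

lemma dist_le_sqrt_mul_of_forall_abs_sub_le {x y : EucSp n} {a : ℝ} (ha : 0 ≤ a)
    (hxy : ∀ j, |x j - y j| ≤ a) : dist x y ≤ √n * a := by
  rw [dist_eq_norm]
  exact norm_le_sqrt_mul_of_forall_abs_le ha fun j => by simpa using hxy j

def centeredCube (n : ℕ) (a : ℝ) : Set (EucSp n) := {x | ∀ j, -a < x j ∧ x j < a}

lemma isOpenInterval_centeredCube (a : ℝ) : IsOpenInterval (centeredCube n a) :=
  ⟨fun _ => -a, fun _ => a, rfl⟩

lemma ball_subset_centeredCube (a : ℝ) : ball (0 : EucSp n) a ⊆ centeredCube n a :=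
  fun x hx j => abs_lt.1 ((PiLp.norm_apply_le x j).trans_lt (mem_ball_zero_iff.1 hx))

lemma diam_centeredCube_le {a : ℝ} (ha : 0 ≤ a) : diam (centeredCube n a) ≤ 2 * (√n * a) :=
  diam_le_of_subset_closedBall (by positivity) fun x hx => mem_closedBall_zero_iff.2 <|
    norm_le_sqrt_mul_of_forall_abs_le ha fun j => (abs_lt.2 (hx j)).le

lemma volume_centeredCube {a : ℝ} (ha : 0 ≤ a) :
    volume (centeredCube n a) = ENNReal.ofReal ((2 * a) ^ n) := by
  have : centeredCube n a = (MeasurableEquiv.toLp 2 (Fin n → ℝ)).symm ⁻¹'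
      (univ.pi fun _ => Ioo (-a) a) := by
    ext x; simp [centeredCube, Set.mem_pi]
  rw [this, (EuclideanSpace.volume_preserving_symm_measurableEquiv_toLp _).measure_preimage_equiv,
    volume_pi_pi]
  simp [Real.volume_Ioo, two_mul, ENNReal.ofReal_pow (by linarith : 0 ≤ a + a)]

lemma ofReal_mul_volume_centeredCube {c r : ℝ} (hc : 0 < c) (hr : 0 < r) :
    ENNReal.ofReal ((volume (ball (0 : EucSp n) 1)).toReal / (2 * c) ^ n) *
      volume (centeredCube n (c * r)) = volume (ball (0 : EucSp n) r) := by
  set ω := (volume (ball (0 : EucSp n) 1)).toReal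
  have hω : ω / (2 * c) ^ n * (2 * (c * r)) ^ n = r ^ n * ω := by
    rw [mul_pow 2 (c * r), mul_pow c r, mul_pow 2 c]
    field_simp
  rw [volume_centeredCube (by positivity), ← ENNReal.ofReal_mul (by positivity), hω,
    ENNReal.ofReal_mul (by positivity), ENNReal.ofReal_toReal measure_ball_lt_top.ne,
    Measure.addHaar_ball_of_pos _ _ hr, finrank_euclideanSpace_fin]

def dyadicInner (m : ℕ) (W : Set (EucSp n)) : Set (EucSp n) :=
  ⋃₀ {S | S ∈ dyadicW (fun _ => m) ∧ S ⊆ W}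

lemma dyadicInner_mem_dyadicH (m : ℕ) (W : Set (EucSp n)) :
    dyadicInner m W ∈ dyadicH (fun _ => m) :=
  ⟨_, fun _ hS => hS.1, rfl⟩

lemma dyadicInner_subset (m : ℕ) (W : Set (EucSp n)) : dyadicInner m W ⊆ W :=
  sUnion_subset fun _ hS => hS.2

lemma volume_setOf_apply_eq (j : Fin n) (c : ℝ) : volume {x : EucSp n | x j = c} = 0 := by
  have : {x : EucSp n | x j = c} =
      (MeasurableEquiv.toLp 2 (Fin n → ℝ)).symm ⁻¹' {f | f j = c} := rfl
  rw [this, (EuclideanSpace.volume_preserving_symm_measurableEquiv_toLp _).measure_preimage_equiv,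
    volume_pi, Measure.pi_hyperplane]

lemma mem_dyadicInner {m : ℕ} {W : Set (EucSp n)} {y : EucSp n} {δ : ℝ}
    (hy : ∀ j, ∀ k : ℤ, y j ≠ k / 2 ^ m) (hW : ball y δ ⊆ W) (hm : √n / 2 ^ m < δ) :
    y ∈ dyadicInner m W := by
  have h2m : (0 : ℝ) < 2 ^ m := by positivity
  set k : Fin n → ℤ := fun j => ⌊y j * 2 ^ m⌋
  have hk : ∀ j, (k j : ℝ) / 2 ^ m < y j ∧ y j < (k j + 1) / 2 ^ m := fun j => by
    refine ⟨(div_le_iff₀ h2m |>.2 (Int.floor_le _)).lt_of_ne (hy j (k j)).symm, ?_⟩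
    rw [lt_div_iff₀ h2m]
    exact Int.lt_floor_add_one _
  refine ⟨_, ⟨⟨k, rfl⟩, fun w hw => hW ?_⟩, hk⟩
  refine mem_ball.2 ((dist_le_sqrt_mul_of_forall_abs_sub_le (a := 1 / 2 ^ m) (by positivity)
    fun j => ?_).trans_lt (by rwa [mul_one_div]))
  have hw := hw j
  have hkj := hk j
  rw [add_div] at hw hkj
  exact abs_le.2 ⟨by linarith [hw.1, hkj.2], by linarith [hw.2, hkj.1]⟩

lemma volume_le_volume_dyadicInner {m : ℕ} {W K : Set (EucSp n)} {δ : ℝ}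
    (hK : ∀ y ∈ K, ball y δ ⊆ W) (hm : √n / 2 ^ m < δ) :
    volume K ≤ volume (dyadicInner m W) := by
  set N := ⋃ (j : Fin n) (k : ℤ), {x : EucSp n | x j = k / 2 ^ m}
  have hN : volume N = 0 :=
    measure_iUnion_null fun j => measure_iUnion_null fun k => volume_setOf_apply_eq j _
  rw [← measure_sdiff_null hN]
  refine measure_mono fun y ⟨hyK, hyN⟩ => mem_dyadicInner (fun j k hjk => hyN ?_) (hK y hyK) hm
  exact mem_iUnion₂.2 ⟨j, k, hjk⟩

lemma exists_lt_volume_dyadicInner_image {U : Set (EucSp n)} (hU : IsOpen U) {a : ℝ≥0∞}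
    (ha : a < volume U) :
    ∃ m : ℕ, ∀ γ : EucSp n ≃ₗᵢ[ℝ] EucSp n, a < volume (dyadicInner m (γ '' U)) := by
  obtain ⟨K, hKU, hK, haK⟩ := hU.exists_lt_isCompact ha
  obtain ⟨δ, hδ, hδK⟩ := hK.exists_thickening_subset_open hU hKU
  obtain ⟨m, hm⟩ := pow_unbounded_of_one_lt (√n / δ) one_lt_two
  refine ⟨m, fun γ => haK.trans_le ?_⟩
  rw [← γ.volume_image]
  refine volume_le_volume_dyadicInner (δ := δ) ?_ ((div_lt_comm₀ hδ (by positivity)).1 hm)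
  rintro _ ⟨z, hz, rfl⟩
  rw [← γ.image_ball]
  exact image_mono ((ball_subset_thickening hz δ).trans hδK)

lemma exists_le_volume_dyadicInner_image {U : Set (EucSp n)} (hU : IsOpen U) {a : ℝ≥0∞}
    (ha : a ≠ ∞) (hle : 2 * a ≤ volume U) :
    ∃ m : ℕ, ∀ γ : EucSp n ≃ₗᵢ[ℝ] EucSp n, a ≤ volume (dyadicInner m (γ '' U)) := by
  rcases eq_or_ne a 0 with rfl | ha0
  · exact ⟨0, fun _ => zero_le⟩
  refine (exists_lt_volume_dyadicInner_image hU ?_).imp fun m hm γ => (hm γ).le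
  exact (ENNReal.lt_add_right ha ha0).trans_le (two_mul a ▸ hle)

lemma setOf_one_lt_maxTrunc_rotateBasis_indFun_ball_subset {B : BasisMap n} (hB : IsDiffBasis B)
    (hTI : IsTIBasis B) (γ : EucSp n ≃ₗᵢ[ℝ] EucSp n) (s r h : ℝ) :
    {x | 1 < maxTrunc (rotateBasis B γ) s (indFun (ball (0 : EucSp n) r) h) x} ⊆
      ball 0 (s + r) := by
  rw [setOf_lt_maxTrunc_rotateBasis_indFun_ball hTI]
  refine (image_mono (setOf_one_lt_maxTrunc_indFun_ball_subset hB s r h)).trans ?_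
  rw [γ.image_ball, map_zero]

lemma exists_le_volume_dyadicInner_setOf_rotateBasis {B : BasisMap n} (hB : IsDiffBasis B)
    (hTI : IsTIBasis B) (s r : ℝ) {h : ℝ} (hh : 0 ≤ h) {a : ℝ≥0∞} (ha : a ≠ ∞)
    (hle : 2 * a ≤ volume {x | 1 < maxTrunc B s (indFun (ball (0 : EucSp n) r) h) x}) :
    ∃ m : ℕ, ∀ γ : EucSp n ≃ₗᵢ[ℝ] EucSp n, a ≤
      volume (dyadicInner m {x | 1 < maxTrunc (rotateBasis B γ) s (indFun (ball 0 r) h) x}) := by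
  simp only [setOf_lt_maxTrunc_rotateBasis_indFun_ball hTI]
  exact exists_le_volume_dyadicInner_image
    ((lowerSemicontinuous_maxTrunc_indFun hB hTI s measurableSet_ball hh).isOpen_preimage 1) ha hle

lemma mPhiPropertyWith_rotations_of_frequently {B : BasisMap n} (hB : IsDiffBasis B)
    (hTI : IsTIBasis B) {Φ T : ℝ → ℝ} (hT : ∀ h, 0 ≤ T h)
    (hΦ : ∀ h > 1, ∃ᶠ r in 𝓝[>] 0, ENNReal.ofReal (Φ h / 2) ≤
      volume {x | 1 < maxTrunc B (T h * r) (indFun (ball (0 : EucSp n) r) h) x} /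
        volume (ball (0 : EucSp n) r)) :
    MPhiPropertyWith {B' | ∃ γ : EucSp n ≃ₗᵢ[ℝ] EucSp n, IsRotation γ ∧ B' = rotateBasis B γ} Φ
      (1 / 4)
      fun h => min (1 / 2) ((volume (ball (0 : EucSp n) 1)).toReal / (2 * (1 + T h)) ^ n) := by
  intro h hh ε hε
  set t := T h
  have ht : 0 ≤ t := hT h
  have hε' : 0 < ε / (2 * (1 + t) * (√n + 1)) := div_pos hε (by positivity)
  obtain ⟨r, hΦr, hr0, hrε⟩ := ((hΦ h hh).and_eventually (Ioo_mem_nhdsGT hε')).exists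
  rw [lt_div_iff₀ (by positivity)] at hrε
  have hr₁ : (1 + t) * r < ε := by nlinarith [Real.sqrt_nonneg n]
  have hr₂ : 2 * (√n * ((1 + t) * r)) < ε := by nlinarith [Real.sqrt_nonneg n]
  have hΦU : ENNReal.ofReal (Φ h / 2) * volume (ball (0 : EucSp n) r) ≤
      volume {x | 1 < maxTrunc B (t * r) (indFun (ball (0 : EucSp n) r) h) x} :=
    (ENNReal.le_div_iff_mul_le (.inl (measure_ball_pos _ _ hr0).ne')
      (.inl measure_ball_lt_top.ne)).1 hΦr
  have h2 : 2 * ENNReal.ofReal (1 / 4 * Φ h) = ENNReal.ofReal (Φ h / 2) := by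
    rw [← ENNReal.ofReal_ofNat, ← ENNReal.ofReal_mul zero_le_two]
    ring_nf
  obtain ⟨m, hm⟩ := exists_le_volume_dyadicInner_setOf_rotateBasis hB hTI (t * r) r
    (h := h) (by linarith) (ENNReal.mul_ne_top ENNReal.ofReal_ne_top measure_ball_lt_top.ne)
    (by rwa [← mul_assoc, h2])
  refine ⟨ball 0 r, fun C => dyadicInner m {x | 1 < maxTrunc C (t * r) (indFun (ball 0 r) h) x},
    centeredCube n ((1 + t) * r), measurableSet_ball, measure_ball_pos _ _ hr0,
    isOpenInterval_centeredCube _, fun C _ x hx => ?_,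
    ⟨fun _ => m, fun C _ => dyadicInner_mem_dyadicH _ _⟩, ?_, ?_, ?_, ?_, ?_⟩
  · exact (dyadicInner_subset _ _ hx).trans_le (maxTrunc_mono _ (by nlinarith) _ _)
  · rintro C ⟨γ, -, rfl⟩
    exact hm γ
  · exact (ball_subset_ball (by nlinarith)).trans (ball_subset_centeredCube _)
  · rintro C ⟨γ, -, rfl⟩
    refine (dyadicInner_subset _ _).trans <|
      (setOf_one_lt_maxTrunc_rotateBasis_indFun_ball_subset hB hTI γ _ _ _).trans ?_
    rw [show t * r + r = (1 + t) * r by ring]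
    exact ball_subset_centeredCube _
  · exact (diam_centeredCube_le (by positivity)).trans_lt hr₂
  · rw [← ofReal_mul_volume_centeredCube (c := 1 + t) (by positivity) hr0]
    gcongr
    exact min_le_right _ _

end

theorem stmt9_general {n : ℕ} (B : BasisMap n) (hB : IsDiffBasis B) (hTI : IsTIBasis B) :
    MPhiProperty {B' | ∃ γ : EucSp n ≃ₗᵢ[ℝ] EucSp n, IsRotation γ ∧ B' = rotateBasis B γ}
      (fun h => (PhiB B h).toReal) := by
  choose T hT0 hT using fun h : ℝ => exists_frequently_ofReal_half_le_of_limsup (l := 𝓝[>] 0)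
    fun t r => volume {x | 1 < maxTrunc B (t * r) (indFun (ball (0 : EucSp n) r) h) x} /
      volume (ball (0 : EucSp n) r)
  have hω : 0 < (volume (ball (0 : EucSp n) 1)).toReal :=
    ENNReal.toReal_pos (measure_ball_pos _ _ one_pos).ne' measure_ball_lt_top.ne
  refine ⟨1 / 4, by norm_num, _, fun h _ => ⟨?_, (min_le_left _ _).trans_lt (by norm_num)⟩,
    mPhiPropertyWith_rotations_of_frequently hB hTI hT0 fun h _ => hT h⟩
  exact lt_min (by norm_num) (div_pos hω (pow_pos (by linarith [hT0 h]) n))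

theorem stmt9 {n : ℕ} (hn : 2 ≤ n) (B : BasisMap n) (hB : IsDiffBasis B) (hTI : IsTIBasis B) :
    MPhiProperty {B' | ∃ γ : EucSp n ≃ₗᵢ[ℝ] EucSp n, IsRotation γ ∧ B' = rotateBasis B γ}
      (fun h => (PhiB B h).toReal) :=
  stmt9_general B hB hTI

end
end

section
/- Let n ≥ 2 and 2 ≤ k ≤ n. There is a constant c > 0 depending only on n such that for every h > 1 and every n-dimensional interval I = ×_{j=1}ⁿ (a_j, a_j + δ_j) whose last n−k+1 edge lengths are equal (δ_{k−1} = δ_k = ⋯ = δ_n), one has |{x ∈ ℝⁿ : M_{𝐈_n^k}(hχ_I)(x) > 1}| ≥ c·h·(ln h)^{k−1}·|I|, where M_{𝐈_n^k} is the (untruncated) maximal operator of the basis 𝐈_n^k. -/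
open MeasureTheory Set Filter Topology Metric ENNReal

noncomputable section

/-!
For `e : Fin n → ℕ` the dyadic block `∏ⱼ (aⱼ + 2^{eⱼ} δⱼ, aⱼ + 2^{eⱼ+1} δⱼ)` lies in the interval
`R_e = ∏ⱼ (aⱼ, aⱼ + 2^{eⱼ+1} δⱼ)`, which contains `I` and has measure `2^{|e|+n} |I|`; hence the
maximal function of `h χ_I` exceeds `1` on the block as soon as `2^{|e|+n} < h`, and `R_e` belongs
to `𝐈ₙᵏ` when `e`, like `δ`, is constant on the coordinates `k-1, …, n-1`. Blocks of distinct `e`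
are disjoint. Letting the first `k-2` exponents and the common value on those coordinates range
over `{0, …, M}` and choosing the last exponent so that `|e| = (n-1) M` gives `(M+1)^{k-1}`
disjoint blocks of measure `2^{(n-1) M} |I|`; with `2^{(n-1) M} ≍ h` this is
`≳ h (log h)^{k-1} |I|`.
-/

def box {n : ℕ} (a b : Fin n → ℝ) : Set (EucSp n) := {y | ∀ j, a j < y j ∧ y j < b j}

theorem measurableSet_box {n : ℕ} (a b : Fin n → ℝ) : MeasurableSet (box a b) := by
  have hcoord : ∀ j : Fin n, Measurable fun y : EucSp n => y j := fun j =>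
    (continuous_apply j).measurable.comp (MeasurableEquiv.toLp 2 (Fin n → ℝ)).symm.measurable
  have : box a b = ⋂ j, {y : EucSp n | a j < y j} ∩ {y | y j < b j} := by
    ext y; simp [box]
  rw [this]
  exact .iInter fun j => (measurableSet_lt measurable_const (hcoord j)).inter
    (measurableSet_lt (hcoord j) measurable_const)

theorem volume_box {n : ℕ} (a b : Fin n → ℝ) :
    volume (box a b) = ∏ j, ENNReal.ofReal (b j - a j) := by
  have hpre : (MeasurableEquiv.toLp 2 (Fin n → ℝ)) ⁻¹' box a b =
      univ.pi fun j => Ioo (a j) (b j) := by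
    ext y; simp [box]
  rw [← (EuclideanSpace.volume_preserving_symm_measurableEquiv_toLp (Fin n)).symm.measure_preimage
    (measurableSet_box a b).nullMeasurableSet, MeasurableEquiv.symm_symm, hpre, volume_pi_pi]
  simp [Real.volume_Ioo]

theorem volume_box_add {n : ℕ} (a : Fin n → ℝ) {c : Fin n → ℝ} (hc : ∀ j, 0 ≤ c j) :
    volume (box a fun j => a j + c j) = ENNReal.ofReal (∏ j, c j) := by
  simp [volume_box, ENNReal.ofReal_prod_of_nonneg fun j _ => hc j]

theorem setLIntegral_indFun_of_subset {n : ℕ} {I R : Set (EucSp n)} (hI : MeasurableSet I)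
    (hIR : I ⊆ R) (h : ℝ) :
    ∫⁻ y in R, ENNReal.ofReal |indFun I h y| = ENNReal.ofReal |h| * volume I := by
  have : (fun y => ENNReal.ofReal |indFun I h y|) = I.indicator fun _ => ENNReal.ofReal |h| := by
    ext y; by_cases hy : y ∈ I <;> simp [indFun, hy]
  rw [this, lintegral_indicator_const hI, Measure.restrict_apply hI, inter_eq_left.2 hIR]

theorem one_lt_maxOp_of_mem {n : ℕ} {B : BasisMap n} {x : EucSp n} {I R : Set (EucSp n)}
    (hR : R ∈ B x) (hI : MeasurableSet I) (hIR : I ⊆ R) {h : ℝ}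
    (hvol : volume R < ENNReal.ofReal h * volume I) : 1 < maxOp B (indFun I h) x := by
  refine lt_of_lt_of_le ?_ (le_iSup₂_of_le R hR le_rfl)
  rw [ENNReal.lt_div_iff_mul_lt (.inr one_ne_top) (.inr one_ne_zero), one_mul,
    setLIntegral_indFun_of_subset hI hIR]
  exact hvol.trans_le (by gcongr; exact le_abs_self h)

theorem box_add_subset_levelSet {n k : ℕ} {a δ c : Fin n → ℝ} (hδ : ∀ j, 0 ≤ δ j)
    (hδc : ∀ j, δ j ≤ c j) (hc : (Finset.univ.image c).card ≤ k) {h : ℝ}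
    (hvol : ∏ j, c j < h * ∏ j, δ j) :
    (box a fun j => a j + c j) ⊆
      {x | 1 < maxOp (baseInk n k) (indFun (box a fun j => a j + δ j) h) x} := by
  intro x hx
  have hR : (box a fun j => a j + c j) ∈ baseInk n k x := ⟨_, _, rfl, hx, by simpa using hc⟩
  have hIR : (box a fun j => a j + δ j) ⊆ box a fun j => a j + c j := fun y hy j =>
    ⟨(hy j).1, (hy j).2.trans_le (by linarith [hδc j])⟩
  refine one_lt_maxOp_of_mem hR (measurableSet_box _ _) hIR ?_
  rw [volume_box_add a hδ, volume_box_add a fun j => (hδ j).trans (hδc j),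
    ← ENNReal.ofReal_mul' (Finset.prod_nonneg fun j _ => hδ j)]
  exact (ENNReal.ofReal_lt_ofReal_iff_of_nonneg
    (Finset.prod_nonneg fun j _ => (hδ j).trans (hδc j))).2 hvol

def ConstFrom {α : Type*} {n : ℕ} (m : ℕ) (f : Fin n → α) : Prop :=
  ∀ i j : Fin n, m ≤ (i : ℕ) → m ≤ (j : ℕ) → f i = f j

theorem ConstFrom.card_image_le {α : Type*} [DecidableEq α] {n m : ℕ} {f : Fin n → α}
    (hf : ConstFrom m f) : (Finset.univ.image f).card ≤ m + 1 := by
  rcases Nat.eq_zero_or_pos n with rfl | hn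
  · simp
  let g : Fin (m + 1) → α := fun i => f ⟨min i (n - 1), by omega⟩
  calc (Finset.univ.image f).card ≤ (Finset.univ.image g).card := by
        refine Finset.card_le_card fun y hy => ?_
        obtain ⟨j, -, rfl⟩ := Finset.mem_image.1 hy
        refine Finset.mem_image.2 ⟨⟨min j m, by omega⟩, Finset.mem_univ _, ?_⟩
        rcases le_total (j : ℕ) m with hj | hj
        · simp only [g, min_eq_left hj]
          congr; omega
        · exact hf _ _ (by simp only; omega) hj
    _ ≤ m + 1 := Finset.card_image_le.trans (by simp)

theorem card_image_le_of_constFrom_init {α : Type*} [DecidableEq α] {n m : ℕ}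
    {f : Fin (n + 1) → α} (hf : ConstFrom m (Fin.init f)) :
    (Finset.univ.image f).card ≤ m + 2 := by
  calc (Finset.univ.image f).card
      ≤ (insert (f (Fin.last n)) (Finset.univ.image (Fin.init f))).card := by
        refine Finset.card_le_card fun y hy => ?_
        obtain ⟨j, -, rfl⟩ := Finset.mem_image.1 hy
        induction j using Fin.lastCases with
        | last => exact Finset.mem_insert_self _ _
        | cast i => exact Finset.mem_insert_of_mem (Finset.mem_image_of_mem _ (Finset.mem_univ i))
    _ ≤ m + 2 := (Finset.card_insert_le _ _).trans (by simpa using hf.card_image_le)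

def dyadicBlock {n : ℕ} (a δ : Fin n → ℝ) (e : Fin n → ℕ) : Set (EucSp n) :=
  box (fun j => a j + 2 ^ e j * δ j) fun j => a j + 2 ^ (e j + 1) * δ j

section DyadicBlock

variable {n : ℕ} (a : Fin n → ℝ) {δ : Fin n → ℝ}

theorem volume_dyadicBlock (hδ : ∀ j, 0 ≤ δ j) (e : Fin n → ℕ) :
    volume (dyadicBlock a δ e) = ENNReal.ofReal (2 ^ (∑ j, e j) * ∏ j, δ j) := by
  have : (fun j => a j + 2 ^ (e j + 1) * δ j) =
      fun j => (a j + 2 ^ e j * δ j) + 2 ^ e j * δ j := by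
    ext j; ring
  rw [dyadicBlock, this, volume_box_add _ fun j => mul_nonneg (by positivity) (hδ j),
    Finset.prod_mul_distrib, Finset.prod_pow_eq_pow_sum]

theorem disjoint_dyadicBlock (hδ : ∀ j, 0 < δ j) {e e' : Fin n → ℕ} (he : e ≠ e') :
    Disjoint (dyadicBlock a δ e) (dyadicBlock a δ e') := by
  wlog hlt : ∃ j, e j < e' j generalizing e e'
  · obtain ⟨j, hj⟩ := Function.ne_iff.1 he
    exact (this he.symm ⟨j, (not_lt.1 fun h => hlt ⟨j, h⟩).lt_of_ne' hj⟩).symm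
  obtain ⟨j, hj⟩ := hlt
  refine Set.disjoint_left.2 fun x hx hx' => ?_
  have hpow : (2 : ℝ) ^ (e j + 1) ≤ 2 ^ e' j := pow_le_pow_right₀ one_le_two hj
  have hxj : x j < a j + 2 ^ (e j + 1) * δ j := (hx j).2
  have hx'j : a j + 2 ^ e' j * δ j < x j := (hx' j).1
  nlinarith [hδ j]

theorem dyadicBlock_subset_levelSet {k : ℕ} (hδ : ∀ j, 0 < δ j) {e : Fin n → ℕ}
    (he : (Finset.univ.image fun j => 2 ^ (e j + 1) * δ j).card ≤ k) {h : ℝ}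
    (heh : 2 ^ (∑ j, e j + n) < h) :
    dyadicBlock a δ e ⊆ {x | 1 < maxOp (baseInk n k) (indFun (box a fun j => a j + δ j) h) x} := by
  refine fun x hx => box_add_subset_levelSet (fun j => (hδ j).le)
    (fun j => le_mul_of_one_le_left (hδ j).le (one_le_pow₀ one_le_two)) he ?_ fun j => ?_
  · rw [Finset.prod_mul_distrib, Finset.prod_pow_eq_pow_sum, Finset.sum_add_distrib]
    simpa using mul_lt_mul_of_pos_right heh (Finset.prod_pos fun j _ => hδ j)
  · exact ⟨by linarith [(hx j).1, mul_pos (pow_pos two_pos (e j)) (hδ j)], (hx j).2⟩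

theorem card_mul_volume_le_of_dyadicBlock_subset (hδ : ∀ j, 0 < δ j) {ι : Type*} [Fintype ι]
    {E : ι → Fin n → ℕ} (hE : Function.Injective E) {T : ℕ} (hT : ∀ i, ∑ j, E i j = T)
    {U : Set (EucSp n)} (hU : ∀ i, dyadicBlock a δ (E i) ⊆ U) :
    Fintype.card ι * ENNReal.ofReal (2 ^ T * ∏ j, δ j) ≤ volume U := by
  calc Fintype.card ι * ENNReal.ofReal (2 ^ T * ∏ j, δ j)
      = ∑ i, volume (dyadicBlock a δ (E i)) := by
        simp [volume_dyadicBlock a (fun j => (hδ j).le), hT]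
    _ = volume (⋃ i, dyadicBlock a δ (E i)) := by
        rw [measure_iUnion (fun i i' hii' => disjoint_dyadicBlock a hδ (hE.ne hii'))
          fun i => measurableSet_box _ _, tsum_fintype]
    _ ≤ volume U := measure_mono (iUnion_subset hU)

end DyadicBlock

def clampedExponent {n m M : ℕ} (v : Fin (m + 1) → Fin (M + 1)) (i : Fin n) : ℕ :=
  v ⟨min i m, by omega⟩

/-- The last coordinate absorbs the rest, so that all the corresponding dyadic blocks have the same
measure `2 ^ (n * M) * |I|`. -/
def balancedExponent (n M : ℕ) {m : ℕ} (v : Fin (m + 1) → Fin (M + 1)) : Fin (n + 1) → ℕ :=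
  Fin.snoc (clampedExponent v) (n * M - ∑ i, clampedExponent (n := n) v i)

section BalancedExponent

variable {n m M : ℕ}

theorem sum_balancedExponent (v : Fin (m + 1) → Fin (M + 1)) :
    ∑ j, balancedExponent n M v j = n * M := by
  have : ∑ i, clampedExponent (n := n) v i ≤ n * M := by
    simpa using Finset.sum_le_card_nsmul Finset.univ (clampedExponent (n := n) v) M
      fun i _ => Nat.lt_succ_iff.1 (v _).isLt
  simp only [balancedExponent, Fin.sum_univ_castSucc, Fin.snoc_castSucc, Fin.snoc_last]
  omega

theorem balancedExponent_injective (hm : m < n) :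
    Function.Injective (balancedExponent n M (m := m)) := by
  intro v v' hvv'
  have hinit := congrArg Fin.init hvv'
  simp only [balancedExponent, Fin.init_snoc] at hinit
  funext i
  have := congrFun hinit ⟨i, by omega⟩
  simpa [clampedExponent, min_eq_left (Nat.lt_succ_iff.1 i.isLt), Fin.ext_iff] using this

theorem constFrom_init_balancedExponent (v : Fin (m + 1) → Fin (M + 1)) :
    ConstFrom m (Fin.init (balancedExponent n M v)) := by
  intro i j hi hj
  simp [balancedExponent, clampedExponent, min_eq_right hi, min_eq_right hj]

end BalancedExponent

theorem ConstFrom.init_two_pow_mul {n m : ℕ} {e : Fin (n + 1) → ℕ} {δ : Fin (n + 1) → ℝ}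
    (he : ConstFrom m (Fin.init e)) (hδ : ConstFrom m (Fin.init δ)) :
    ConstFrom m (Fin.init fun j => 2 ^ (e j + 1) * δ j) := fun i j hi hj => by
  change 2 ^ (Fin.init e i + 1) * Fin.init δ i = 2 ^ (Fin.init e j + 1) * Fin.init δ j
  rw [he i j hi hj, hδ i j hi hj]

theorem pow_mul_volume_le_levelSet {n m : ℕ} (hm : m < n) {a δ : Fin (n + 1) → ℝ}
    (hδ : ∀ j, 0 < δ j) (hδc : ConstFrom m (Fin.init δ)) {h : ℝ} {M : ℕ}
    (hMh : 2 ^ (n * M + (n + 1)) < h) :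
    ((M + 1) ^ (m + 1) : ℝ≥0∞) * ENNReal.ofReal (2 ^ (n * M) * ∏ j, δ j) ≤
      volume {x | 1 < maxOp (baseInk (n + 1) (m + 2)) (indFun (box a fun j => a j + δ j) h) x} := by
  have hblock (v : Fin (m + 1) → Fin (M + 1)) := dyadicBlock_subset_levelSet a hδ
    (card_image_le_of_constFrom_init ((constFrom_init_balancedExponent v).init_two_pow_mul hδc))
    (by rwa [sum_balancedExponent])
  simpa using card_mul_volume_le_of_dyadicBlock_subset a hδ (balancedExponent_injective hm)
    sum_balancedExponent hblock

theorem mul_log_pow_le_two_pow {h : ℝ} (hh : 1 < h) {N : ℕ} (hN : h < 2 ^ (N + 1)) (p : ℕ) :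
    h * Real.log h ^ p ≤ 2 ^ (N + 1) * (N + 1) ^ p := by
  have hlog : Real.log h ≤ N + 1 := by
    have := Real.log_lt_log (by linarith) hN
    rw [Real.log_pow] at this
    push_cast at this
    nlinarith [Real.log_two_lt_d9, Real.log_pos one_lt_two]
  have := (Real.log_pos hh).le
  gcongr

theorem two_pow_mul_pow_le {n m : ℕ} (hm : m < n) (N : ℕ) :
    2 ^ (N + 1) * (N + 1) ^ (m + 1) ≤ 4 ^ (n + 1) * (2 * n + 2) ^ n *
      (((N - (n + 2)) / n + 1) ^ (m + 1) * 2 ^ (n * ((N - (n + 2)) / n))) := by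
  set M := (N - (n + 2)) / n
  have hM : N - (n + 2) < n * (M + 1) := Nat.lt_mul_div_succ _ (by omega)
  have hexp : N + 1 ≤ 2 * (n + 1) + n * M := by rw [Nat.mul_succ] at hM; omega
  have hbase : N + 1 ≤ (2 * n + 2) * (M + 1) := by nlinarith
  calc 2 ^ (N + 1) * (N + 1) ^ (m + 1)
      ≤ 2 ^ (2 * (n + 1) + n * M) * ((2 * n + 2) * (M + 1)) ^ (m + 1) := by
        gcongr
        exact one_le_two
    _ = 4 ^ (n + 1) * (2 * n + 2) ^ (m + 1) * ((M + 1) ^ (m + 1) * 2 ^ (n * M)) := by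
        rw [pow_add, pow_mul, mul_pow]
        ring
    _ ≤ 4 ^ (n + 1) * (2 * n + 2) ^ n * ((M + 1) ^ (m + 1) * 2 ^ (n * M)) := by
        gcongr
        · omega
        · exact hm

theorem inv_mul_mul_log_pow_le {n m : ℕ} (hm : m < n) {h : ℝ} (hh : 1 < h) {N : ℕ}
    (hN : h < 2 ^ (N + 1)) :
    ((4 : ℝ) ^ (n + 1) * (2 * n + 2) ^ n)⁻¹ * h * Real.log h ^ (m + 1) ≤
      (((N - (n + 2)) / n : ℕ) + 1) ^ (m + 1) * 2 ^ (n * ((N - (n + 2)) / n)) := by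
  rw [mul_assoc, inv_mul_le_iff₀ (by positivity)]
  exact (mul_log_pow_le_two_pow hh hN _).trans (by exact_mod_cast two_pow_mul_pow_le hm N)

theorem box_subset_levelSet {n m : ℕ} {a δ : Fin (n + 1) → ℝ} (hδ : ∀ j, 0 < δ j)
    (hδc : ConstFrom m (Fin.init δ)) {h : ℝ} (hh : 1 < h) :
    (box a fun j => a j + δ j) ⊆
      {x | 1 < maxOp (baseInk (n + 1) (m + 2)) (indFun (box a fun j => a j + δ j) h) x} :=
  box_add_subset_levelSet (fun j => (hδ j).le) (fun j => le_rfl)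
    (card_image_le_of_constFrom_init hδc)
    (by simpa using mul_lt_mul_of_pos_right hh (Finset.prod_pos fun j _ => hδ j))

theorem stmt14_general (n k : ℕ) (hk1 : 2 ≤ k) (hk2 : k ≤ n) :
    ∃ c : ℝ, 0 < c ∧ ∀ (a δ : Fin n → ℝ), (∀ j, 0 < δ j) →
      (∀ i j : Fin n, k ≤ (i : ℕ) + 2 → k ≤ (j : ℕ) + 2 → δ i = δ j) →
      ∀ h : ℝ, 1 < h →
        ENNReal.ofReal (c * h * (Real.log h) ^ (k - 1)) *
            volume {y : EucSp n | ∀ j, a j < y j ∧ y j < a j + δ j} ≤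
          volume {x : EucSp n |
            1 < maxOp (baseInk n k) (indFun {y : EucSp n | ∀ j, a j < y j ∧ y j < a j + δ j} h) x} := by
  obtain ⟨m, rfl⟩ : ∃ m, k = m + 2 := ⟨k - 2, by omega⟩
  obtain ⟨n, rfl⟩ : ∃ n', n = n' + 1 := ⟨n - 1, by omega⟩
  have hm : m < n := by omega
  refine ⟨((4 : ℝ) ^ (n + 1) * (2 * n + 2) ^ n)⁻¹, by positivity, fun a δ hδ hδc h hh => ?_⟩
  have hδc' : ConstFrom m (Fin.init δ) := fun i j hi hj => hδc _ _ (by simpa) (by simpa)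
  obtain ⟨N, hNh, hhN⟩ := exists_nat_pow_near hh.le one_lt_two
  have hbound := inv_mul_mul_log_pow_le hm hh hhN
  -- `M` is the largest exponent with `2 ^ (n * M + n + 1) < h` when `N ≥ n + 2`; below that the
  -- interval `I` itself carries the estimate.
  set M := (N - (n + 2)) / n
  rw [show m + 2 - 1 = m + 1 by omega]
  change _ * volume (box a fun j => a j + δ j) ≤ _
  rcases lt_or_ge N (n + 2) with hsmall | hlarge
  · have hM : M = 0 := by simp [M, Nat.sub_eq_zero_of_le hsmall.le]
    rw [hM] at hbound
    calc _ ≤ volume (box a fun j => a j + δ j) :=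
          mul_le_of_le_one_left (by positivity) (ENNReal.ofReal_le_one.2 (by simpa using hbound))
      _ ≤ _ := measure_mono (box_subset_levelSet hδ hδc' hh)
  · have hMh : 2 ^ (n * M + (n + 1)) < h :=
      (pow_lt_pow_right₀ (one_lt_two (α := ℝ))
        (by have : n * M ≤ N - (n + 2) := Nat.mul_div_le _ _; omega)).trans_le hNh
    calc _ ≤ ENNReal.ofReal ((M + 1) ^ (m + 1) * 2 ^ (n * M)) * ENNReal.ofReal (∏ j, δ j) := by
          rw [volume_box_add a fun j => (hδ j).le]
          exact mul_le_mul_left (ENNReal.ofReal_le_ofReal hbound) _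
      _ = ((M + 1) ^ (m + 1) : ℝ≥0∞) * ENNReal.ofReal (2 ^ (n * M) * ∏ j, δ j) := by
          rw [ENNReal.ofReal_mul (by positivity), ENNReal.ofReal_mul (by positivity), mul_assoc]
          norm_cast
      _ ≤ _ := pow_mul_volume_le_levelSet hm hδ hδc' hMh

theorem stmt14 (n k : ℕ) (hn : 2 ≤ n) (hk1 : 2 ≤ k) (hk2 : k ≤ n) :
    ∃ c : ℝ, 0 < c ∧ ∀ (a δ : Fin n → ℝ), (∀ j, 0 < δ j) →
      (∀ i j : Fin n, k ≤ (i : ℕ) + 2 → k ≤ (j : ℕ) + 2 → δ i = δ j) →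
      ∀ h : ℝ, 1 < h →
        ENNReal.ofReal (c * h * (Real.log h) ^ (k - 1)) *
            volume {y : EucSp n | ∀ j, a j < y j ∧ y j < a j + δ j} ≤
          volume {x : EucSp n |
            1 < maxOp (baseInk n k) (indFun {y : EucSp n | ∀ j, a j < y j ∧ y j < a j + δ j} h) x} :=
  stmt14_general n k hk1 hk2
end
end
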